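/- arXiv:2602.08758 — 9 statements merged into one kernel-verified Lean document; each statement's English description precedes it below -/
import Mathlib

section
/- For any graph G with no isolated vertices, 2·γ(G) ≤ γ_tR(G) ≤ 3·γ(G), where γ is the domination number and γ_tR the total Roman domination number. -/
open Finset

/-- A graph has no isolated vertices. -/
def SimpleGraph.IsolateFree {V : Type*} (G : SimpleGraph V) : Prop :=
  ∀ v, ∃ u, G.Adj v u

/-- A Roman dominating function. -/
def SimpleGraph.IsRDF {V : Type*} (G : SimpleGraph V) (f : V → Fin 3) : Prop :=
  ∀ v, f v = 0 → ∃ u, G.Adj v u ∧ f u = 2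

/-- A total Roman dominating function. -/
def SimpleGraph.IsTRDF {V : Type*} (G : SimpleGraph V) (f : V → Fin 3) : Prop :=
  (∀ v, f v = 0 → ∃ u, G.Adj v u ∧ f u = 2) ∧
  (∀ v, f v ≠ 0 → ∃ u, G.Adj v u ∧ f u ≠ 0)

/-- The Roman domination number. -/
noncomputable def SimpleGraph.rdn {V : Type*} [Fintype V] (G : SimpleGraph V) : ℕ :=
  sInf {w | ∃ f : V → Fin 3, G.IsRDF f ∧ w = ∑ v, (f v : ℕ)}

/-- The total Roman domination number. -/
noncomputable def SimpleGraph.trdn {V : Type*} [Fintype V] (G : SimpleGraph V) : ℕ :=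
  sInf {w | ∃ f : V → Fin 3, G.IsTRDF f ∧ w = ∑ v, (f v : ℕ)}

/-- A total dominating set. -/
def SimpleGraph.IsTDS {V : Type*} (G : SimpleGraph V) (S : Finset V) : Prop :=
  ∀ v, ∃ u ∈ S, G.Adj v u

/-- A dominating set. -/
def SimpleGraph.IsDS {V : Type*} (G : SimpleGraph V) (S : Finset V) : Prop :=
  ∀ v, v ∈ S ∨ ∃ u ∈ S, G.Adj v u

/-- The total domination number. -/
noncomputable def SimpleGraph.tdn {V : Type*} [Fintype V] (G : SimpleGraph V) : ℕ :=
  sInf {n | ∃ S : Finset V, G.IsTDS S ∧ n = S.card}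

/-- The domination number. -/
noncomputable def SimpleGraph.dn {V : Type*} [Fintype V] (G : SimpleGraph V) : ℕ :=
  sInf {n | ∃ S : Finset V, G.IsDS S ∧ n = S.card}

/-- The total Roman bondage number, in ℕ∞ (∞ if no valid edge set exists). -/
noncomputable def SimpleGraph.btR {V : Type*} [Fintype V] (G : SimpleGraph V) : ℕ∞ :=
  sInf {n : ℕ∞ | ∃ E' : Finset (Sym2 V), ↑E' ⊆ G.edgeSet ∧
    (G.deleteEdges ↑E').IsolateFree ∧ G.trdn < (G.deleteEdges ↑E').trdn ∧ n = E'.card}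

/-- The total bondage number, in ℕ∞. -/
noncomputable def SimpleGraph.bt {V : Type*} [Fintype V] (G : SimpleGraph V) : ℕ∞ :=
  sInf {n : ℕ∞ | ∃ E' : Finset (Sym2 V), ↑E' ⊆ G.edgeSet ∧
    (G.deleteEdges ↑E').IsolateFree ∧ G.tdn < (G.deleteEdges ↑E').tdn ∧ n = E'.card}

/-- The bondage number, in ℕ∞. -/
noncomputable def SimpleGraph.bond {V : Type*} [Fintype V] (G : SimpleGraph V) : ℕ∞ :=
  sInf {n : ℕ∞ | ∃ E' : Finset (Sym2 V), ↑E' ⊆ G.edgeSet ∧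
    G.dn < (G.deleteEdges ↑E').dn ∧ n = E'.card}

/-- The vertex cover number. -/
noncomputable def SimpleGraph.vcn {V : Type*} [Fintype V] (G : SimpleGraph V) : ℕ :=
  sInf {n | ∃ S : Finset V, (∀ u v, G.Adj u v → u ∈ S ∨ v ∈ S) ∧ n = S.card}

/-- The S-external private neighborhood of v. -/
def SimpleGraph.epn {V : Type*} (G : SimpleGraph V) (v : V) (S : Set V) : Set V :=
  {w | w ∉ S ∧ G.Adj w v ∧ ∀ x ∈ S, G.Adj w x → x = v}

/-!
Upper bound: given a minimum dominating set `S`, label `S` by `2` and one neighbour of each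
vertex of `S` by `1`. Lower bound: take a minimum TRDF and let `A` be the set of vertices labelled
`1` that have a neighbour labelled `1`. Every vertex of `A` has a neighbour in `A`, so by Ore's
argument (the complement of a minimum dominating set is again dominating) `A` is dominated by at
most `|A|/2` of its vertices; these together with the vertices labelled `2` dominate `G`.
-/

namespace SimpleGraph

variable {V : Type*} {G : SimpleGraph V}

variable (G) in
def Dominates (D A : Finset V) : Prop :=
  ∀ v ∈ A, v ∈ D ∨ ∃ u ∈ D, G.Adj v u

section Ore

variable [DecidableEq V] {A D : Finset V}

lemma Dominates.sdiff_of_forall_card_le (hDA : D ⊆ A) (hD : G.Dominates D A)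
    (hA : ∀ v ∈ A, ∃ u ∈ A, G.Adj v u)
    (hmin : ∀ D' ⊆ A, G.Dominates D' A → D.card ≤ D'.card) :
    G.Dominates (A \ D) A := by
  intro v hv
  by_cases hvD : v ∈ D
  swap
  · exact Or.inl (mem_sdiff.2 ⟨hv, hvD⟩)
  right
  have h_erase : ¬ G.Dominates (D.erase v) A := fun h =>
    (card_erase_lt_of_mem hvD).not_ge (hmin _ ((erase_subset _ _).trans hDA) h)
  simp only [Dominates, not_forall, not_or, not_exists, not_and] at h_erase
  obtain ⟨u, huA, huD, hu⟩ := h_erase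
  by_cases huv : u = v
  · -- `v` is dominated only by itself, so its neighbour in `A` lies outside `D`
    subst huv
    obtain ⟨x, hxA, hux⟩ := hA u huA
    have hxD : x ∉ D := fun hxD => hu x (mem_erase.2 ⟨hux.ne.symm, hxD⟩) hux
    exact ⟨x, mem_sdiff.2 ⟨hxA, hxD⟩, hux⟩
  · -- `u ∉ D` is a private neighbour of `v`
    have huD' : u ∉ D := fun h => huD (mem_erase.2 ⟨huv, h⟩)
    obtain ⟨w, hwD, huw⟩ := (hD u huA).resolve_left huD'
    obtain rfl : w = v := by_contra fun h => hu w (mem_erase.2 ⟨h, hwD⟩) huw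
    exact ⟨u, mem_sdiff.2 ⟨huA, huD'⟩, huw.symm⟩

variable (G) in
theorem exists_dominates_two_mul_card_le (A : Finset V) (hA : ∀ v ∈ A, ∃ u ∈ A, G.Adj v u) :
    ∃ T ⊆ A, G.Dominates T A ∧ 2 * T.card ≤ A.card := by
  classical
  obtain ⟨D, hD, hmin⟩ := exists_min_image {D ∈ A.powerset | G.Dominates D A} card
    ⟨A, mem_filter.2 ⟨mem_powerset_self A, fun v hv => Or.inl hv⟩⟩
  simp only [mem_filter, mem_powerset, and_imp] at hD hmin
  have h := hmin _ sdiff_subset (hD.2.sdiff_of_forall_card_le hD.1 hA hmin)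
  rw [card_sdiff_of_subset hD.1] at h
  exact ⟨D, hD.1, hD.2, by have := card_le_card hD.1; omega⟩

end Ore

lemma sum_fin_three_eq {ι : Type*} [Fintype ι] (f : ι → Fin 3) :
    ∑ i, (f i : ℕ) = #{i | f i = 1} + 2 * #{i | f i = 2} := by
  have h : ∀ x : Fin 3, (x : ℕ) = (if x = 1 then 1 else 0) + 2 * (if x = 2 then 1 else 0) := by
    decide
  simp only [h, sum_add_distrib, ← mul_sum, sum_boole, Nat.cast_id]

lemma IsolateFree.isTRDF_const_two (hG : G.IsolateFree) : G.IsTRDF fun _ => 2 :=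
  ⟨fun _ h => absurd h (by simp), fun v _ => (hG v).imp fun _ hu => ⟨hu, by simp⟩⟩

variable [Fintype V]

lemma dn_le_card {S : Finset V} (hS : G.IsDS S) : G.dn ≤ S.card :=
  Nat.sInf_le ⟨S, hS, rfl⟩

lemma trdn_le_sum {f : V → Fin 3} (hf : G.IsTRDF f) : G.trdn ≤ ∑ v, (f v : ℕ) :=
  Nat.sInf_le ⟨f, hf, rfl⟩

variable (G) in
lemma exists_isDS_card_eq_dn : ∃ S, G.IsDS S ∧ S.card = G.dn := by
  obtain ⟨S, hS, h⟩ := Nat.sInf_mem (⟨_, univ, fun v => Or.inl (mem_univ v), rfl⟩ :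
    {n | ∃ S : Finset V, G.IsDS S ∧ n = S.card}.Nonempty)
  exact ⟨S, hS, h.symm⟩

lemma IsolateFree.exists_isTRDF_sum_eq_trdn (hG : G.IsolateFree) :
    ∃ f, G.IsTRDF f ∧ ∑ v, (f v : ℕ) = G.trdn := by
  obtain ⟨f, hf, h⟩ := Nat.sInf_mem (⟨_, _, hG.isTRDF_const_two, rfl⟩ :
    {w | ∃ f : V → Fin 3, G.IsTRDF f ∧ w = ∑ v, (f v : ℕ)}.Nonempty)
  exact ⟨f, hf, h.symm⟩

theorem IsTRDF.two_mul_dn_le {f : V → Fin 3} (hf : G.IsTRDF f) :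
    2 * G.dn ≤ ∑ v, (f v : ℕ) := by
  classical
  set A : Finset V := {v | f v = 1 ∧ ∃ u, G.Adj v u ∧ f u = 1}
  have hA : ∀ v ∈ A, ∃ u ∈ A, G.Adj v u := by
    simp only [A, mem_filter, mem_univ, true_and]
    rintro v ⟨hv, u, hvu, hu⟩
    exact ⟨u, ⟨hu, v, hvu.symm, hv⟩, hvu⟩
  set V₂ : Finset V := {v | f v = 2}
  obtain ⟨T, -, hT, hTcard⟩ := exists_dominates_two_mul_card_le G A hA
  -- the vertices labelled `1` without a neighbour labelled `1` are dominated by those labelled `2`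
  have hS : G.IsDS (V₂ ∪ T) := by
    intro v
    simp only [V₂, mem_union, mem_filter, mem_univ, true_and]
    obtain hv | hv | hv : f v = 0 ∨ f v = 1 ∨ f v = 2 := by omega
    · exact Or.inr ((hf.1 v hv).imp fun u ⟨hvu, hu⟩ => ⟨Or.inl hu, hvu⟩)
    · obtain ⟨u, hvu, hu⟩ := hf.2 v (by simp [hv])
      obtain hu | hu : f u = 1 ∨ f u = 2 := by omega
      · have hvA : v ∈ A := by
          simp only [A, mem_filter, mem_univ, true_and]; exact ⟨hv, u, hvu, hu⟩
        exact (hT v hvA).imp Or.inr fun ⟨w, hwT, hvw⟩ => ⟨w, Or.inr hwT, hvw⟩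
      · exact Or.inr ⟨u, Or.inl hu, hvu⟩
    · exact Or.inl (Or.inl hv)
  have hAcard : A.card ≤ #{v | f v = 1} := card_le_card fun v hv => by
    simp only [A, mem_filter] at hv ⊢; exact ⟨hv.1, hv.2.1⟩
  calc 2 * G.dn ≤ 2 * (V₂ ∪ T).card := by gcongr; exact dn_le_card hS
    _ ≤ 2 * V₂.card + 2 * T.card := by have := card_union_le V₂ T; omega
    _ ≤ #{v | f v = 1} + 2 * V₂.card := by omega
    _ = ∑ v, (f v : ℕ) := (sum_fin_three_eq f).symm

theorem IsDS.exists_isTRDF_sum_le (hG : G.IsolateFree) {S : Finset V} (hS : G.IsDS S) :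
    ∃ f, G.IsTRDF f ∧ ∑ v, (f v : ℕ) ≤ 3 * S.card := by
  classical
  choose nb hnb using hG
  let f : V → Fin 3 := fun v => if v ∈ S then 2 else if v ∈ S.image nb then 1 else 0
  have hf_two : ∀ v, f v = 2 ↔ v ∈ S := fun v => by simp only [f]; split_ifs <;> simp_all
  have hf_one : ∀ v, f v = 1 → v ∈ S.image nb := fun v => by
    simp only [f]; split_ifs <;> simp_all
  have hf_ne : ∀ v, f v ≠ 0 ↔ v ∈ S ∨ v ∈ S.image nb := fun v => by
    simp only [f]; split_ifs <;> simp_all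
  refine ⟨f, ⟨fun v hv => ?_, fun v hv => ?_⟩, ?_⟩
  · have hvS : v ∉ S := fun h => by simp [(hf_two v).2 h] at hv
    obtain ⟨u, huS, hvu⟩ := (hS v).resolve_left hvS
    exact ⟨u, hvu, (hf_two u).2 huS⟩
  · rcases (hf_ne v).1 hv with hvS | hv'
    · exact ⟨nb v, hnb v, (hf_ne _).2 (Or.inr (mem_image_of_mem nb hvS))⟩
    · obtain ⟨w, hwS, rfl⟩ := mem_image.1 hv'
      exact ⟨w, (hnb w).symm, (hf_ne w).2 (Or.inl hwS)⟩
  · have h_two : #{v | f v = 2} = S.card := by congr 1; ext v; simp [hf_two]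
    have h_one : #{v | f v = 1} ≤ S.card :=
      (card_le_card fun v hv => hf_one v (mem_filter.1 hv).2).trans card_image_le
    rw [sum_fin_three_eq]
    omega

end SimpleGraph

theorem stmt_2 {V : Type*} [Fintype V] (G : SimpleGraph V) (hG : G.IsolateFree) :
    2 * G.dn ≤ G.trdn ∧ G.trdn ≤ 3 * G.dn := by
  obtain ⟨f, hf, hf_sum⟩ := hG.exists_isTRDF_sum_eq_trdn
  obtain ⟨S, hS, hS_card⟩ := G.exists_isDS_card_eq_dn
  obtain ⟨g, hg, hg_sum⟩ := hS.exists_isTRDF_sum_le hG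
  exact ⟨hf_sum ▸ hf.two_mul_dn_le, hS_card ▸ (SimpleGraph.trdn_le_sum hg).trans hg_sum⟩
end

section
/- Let G be a connected graph of order n ≥ 3. Then γ_tR(G) = γ_t(G) + 1 if and only if Δ(G) = n − 1. -/
open Finset

section Auxiliary

variable {V : Type*}

lemma my_exists_adj [Fintype V] (G : SimpleGraph V) (hconn : G.Connected)
    (h2 : 2 ≤ Fintype.card V) (v : V) : ∃ u, G.Adj v u := by
  obtain ⟨w, hw⟩ := Fintype.exists_ne_of_one_lt_card (by omega) v
  obtain ⟨p⟩ := hconn.preconnected v w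
  cases p with
  | nil => exact absurd rfl hw
  | cons h _ => exact ⟨_, h⟩

lemma my_boundary (G : SimpleGraph V) (S : Set V) :
    ∀ {x w : V}, G.Walk x w → x ∈ S → w ∉ S → ∃ a ∈ S, ∃ b, b ∉ S ∧ G.Adj a b := by
  intro x w p
  induction p with
  | nil => intro hx hw; exact absurd hx hw
  | @cons u c w h p ih =>
      intro hx hw
      by_cases hc : c ∈ S
      · exact ih hc hw
      · exact ⟨u, hx, c, hc, h⟩

/-- There is an edge (v,b) with another neighbor a of v, and b not a support vertex. -/
lemma my_lemmaA [Fintype V] (G : SimpleGraph V) (hconn : G.Connected)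
    (hn : 3 ≤ Fintype.card V) :
    ∃ v b, G.Adj v b ∧ (∃ a, G.Adj v a ∧ a ≠ b) ∧
      (∀ w, G.Adj w b → ∃ c, G.Adj w c ∧ c ≠ b) := by
  classical
  by_cases hsup : ∃ b, ¬ ∃ z, G.Adj z b ∧ ∀ c, G.Adj z c → c = b
  · obtain ⟨b, hb⟩ := hsup
    push_neg at hb
    have hb' : ∀ w, G.Adj w b → ∃ c, G.Adj w c ∧ c ≠ b := by
      intro w hw
      obtain ⟨c, hc1, hc2⟩ := hb w hw
      exact ⟨c, hc1, hc2⟩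
    obtain ⟨v, hv⟩ := my_exists_adj G hconn (by omega) b
    obtain ⟨a, ha1, ha2⟩ := hb' v hv.symm
    exact ⟨v, b, hv.symm, ⟨a, ha1, ha2⟩, hb'⟩
  · exfalso
    push_neg at hsup
    have hne : Nonempty V := Fintype.card_pos_iff.mp (by omega)
    obtain ⟨w0⟩ := hne
    obtain ⟨z, hz1, hz2⟩ := hsup w0
    obtain ⟨z', hz'1, hz'2⟩ := hsup z
    have hz'w0 : z' = w0 := hz2 z' hz'1.symm
    have hNw0 : ∀ c, G.Adj w0 c → c = z := hz'w0 ▸ hz'2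
    have hzw0 : z ≠ w0 := fun h => G.irrefl (h ▸ hz1)
    obtain ⟨u, hu⟩ : ∃ u, u ∉ ({z, w0} : Finset V) := by
      by_contra hc
      push_neg at hc
      have : (univ : Finset V) ⊆ {z, w0} := fun x _ => hc x
      have h1 := Finset.card_le_card this
      have h2 : ({z, w0} : Finset V).card ≤ 2 := Finset.card_insert_le _ _ |>.trans (by simp)
      rw [Finset.card_univ] at h1
      omega
    have huS : u ∉ ({z, w0} : Set V) := by
      intro h
      rcases h with h | h
      · exact hu (by rw [h]; exact Finset.mem_insert_self _ _)
      · exact hu (by rw [h]; exact Finset.mem_insert_of_mem (Finset.mem_singleton_self _))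
    obtain ⟨p⟩ := hconn.preconnected z u
    obtain ⟨a, haS, b, hbS, hab⟩ := my_boundary G {z, w0} p (Or.inl rfl) huS
    rcases haS with h | h
    · exact hbS (Or.inr (hz2 b (h ▸ hab)))
    · exact hbS (Or.inl (hNw0 b (h ▸ hab)))

lemma my_weight_eq [Fintype V] (f : V → Fin 3) :
    ∑ w, (f w : ℕ) = (univ.filter (fun w => f w = 1)).card
      + 2 * (univ.filter (fun w => f w = 2)).card := by
  classical
  have h : ∀ x : Fin 3, (x : ℕ) = (if x = 1 then 1 else 0) + (if x = 2 then 2 else 0) := by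
    decide
  calc ∑ w, (f w : ℕ)
      = ∑ w, ((if f w = 1 then 1 else 0) + (if f w = 2 then 2 else 0)) :=
        Finset.sum_congr rfl (fun w _ => h (f w))
    _ = (∑ w, if f w = 1 then 1 else 0) + ∑ w, (if f w = 2 then 2 else 0) :=
        Finset.sum_add_distrib
    _ = (univ.filter (fun w => f w = 1)).card + 2 * (univ.filter (fun w => f w = 2)).card := by
        have hb1 : (∑ w, if f w = 1 then (1:ℕ) else 0)
            = (univ.filter (fun w => f w = 1)).card := by
          rw [Finset.sum_boole, Nat.cast_id]
        have hb2 : (∑ w, if f w = 2 then (2:ℕ) else 0)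
            = 2 * (univ.filter (fun w => f w = 2)).card := by
          have hx2 : (∑ w, if f w = 2 then (2:ℕ) else 0)
              = ∑ w, 2 * (if f w = 2 then (1:ℕ) else 0) := by
            apply Finset.sum_congr rfl
            intro x _
            by_cases hx : f x = 2 <;> simp [hx]
          rw [hx2, ← Finset.mul_sum, Finset.sum_boole, Nat.cast_id]
        rw [hb1, hb2]

lemma my_filter_ne_zero [Fintype V] (f : V → Fin 3) :
    (univ.filter (fun w => f w ≠ 0)).card
      = (univ.filter (fun w => f w = 1)).card + (univ.filter (fun w => f w = 2)).card := by
  classical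
  have h1 : (univ.filter (fun w => f w ≠ 0))
      = univ.filter (fun w => f w = 1) ∪ univ.filter (fun w => f w = 2) := by
    rw [← Finset.filter_or]
    apply Finset.filter_congr
    intro x _
    have : ∀ y : Fin 3, (y ≠ 0) ↔ (y = 1 ∨ y = 2) := by decide
    exact this (f x)
  rw [h1]
  apply Finset.card_union_of_disjoint
  rw [Finset.disjoint_left]
  intro a ha hb
  have h1 := (Finset.mem_filter.mp ha).2
  have h2 := (Finset.mem_filter.mp hb).2
  rw [h1] at h2
  exact absurd h2 (by decide)

lemma my_degree_le [Fintype V] (G : SimpleGraph V) [DecidableRel G.Adj] (w : V) :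
    G.degree w ≤ Fintype.card V - 1 := by
  classical
  have hsub : G.neighborFinset w ⊆ univ.erase w := by
    intro x hx
    rw [SimpleGraph.mem_neighborFinset] at hx
    exact Finset.mem_erase.mpr ⟨(G.ne_of_adj hx.symm), Finset.mem_univ x⟩
  have := Finset.card_le_card hsub
  rw [Finset.card_erase_of_mem (Finset.mem_univ w), Finset.card_univ] at this
  rw [← SimpleGraph.card_neighborFinset_eq_degree]
  exact this

lemma my_maxdeg_eq [Fintype V] (G : SimpleGraph V) [DecidableRel G.Adj]
    (hpos : 0 < Fintype.card V) (v : V)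
    (huniv : ∀ z, z ≠ v → G.Adj v z) : G.maxDegree = Fintype.card V - 1 := by
  classical
  have hne : Nonempty V := Fintype.card_pos_iff.mp hpos
  have hdeg : G.degree v = Fintype.card V - 1 := by
    have h1 : G.neighborFinset v = univ.erase v := by
      ext w
      rw [SimpleGraph.mem_neighborFinset, Finset.mem_erase]
      constructor
      · intro h; exact ⟨(G.ne_of_adj h).symm, Finset.mem_univ w⟩
      · intro h; exact huniv w h.1
    rw [← SimpleGraph.card_neighborFinset_eq_degree, h1,
      Finset.card_erase_of_mem (Finset.mem_univ v), Finset.card_univ]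
  apply le_antisymm
  · obtain ⟨w, hw⟩ := G.exists_maximal_degree_vertex
    rw [hw]
    exact my_degree_le G w
  · rw [← hdeg]
    exact G.degree_le_maxDegree v

lemma my_exists_univ [Fintype V] (G : SimpleGraph V) [DecidableRel G.Adj]
    (hpos : 0 < Fintype.card V) (h : G.maxDegree = Fintype.card V - 1) :
    ∃ v, ∀ z, z ≠ v → G.Adj v z := by
  classical
  have hne : Nonempty V := Fintype.card_pos_iff.mp hpos
  obtain ⟨v, hv⟩ := G.exists_maximal_degree_vertex
  refine ⟨v, ?_⟩
  have hdeg : G.degree v = Fintype.card V - 1 := by rw [← hv, h]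
  have hsub : G.neighborFinset v ⊆ univ.erase v := by
    intro x hx
    rw [SimpleGraph.mem_neighborFinset] at hx
    exact Finset.mem_erase.mpr ⟨(G.ne_of_adj hx.symm), Finset.mem_univ x⟩
  have heq : G.neighborFinset v = univ.erase v := by
    apply Finset.eq_of_subset_of_card_le hsub
    rw [Finset.card_erase_of_mem (Finset.mem_univ v), Finset.card_univ,
      SimpleGraph.card_neighborFinset_eq_degree, hdeg]
  intro z hz
  have : z ∈ univ.erase v := Finset.mem_erase.mpr ⟨hz, Finset.mem_univ z⟩
  rw [← heq, SimpleGraph.mem_neighborFinset] at this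
  exact this

lemma my_trdn_lb [Fintype V] (G : SimpleGraph V) (hn : 3 ≤ Fintype.card V)
    (f : V → Fin 3) (hf : G.IsTRDF f) : 3 ≤ ∑ w, (f w : ℕ) := by
  classical
  by_cases h2 : ∃ w, f w = 2
  · obtain ⟨w, hw⟩ := h2
    obtain ⟨u, hadj, hu⟩ := hf.2 w (by rw [hw]; decide)
    have hwu : w ≠ u := G.ne_of_adj hadj
    have hsum : (f w : ℕ) + (f u : ℕ) ≤ ∑ x, (f x : ℕ) := by
      have h1 := Finset.sum_le_sum_of_subset
        (Finset.subset_univ ({w, u} : Finset V)) (f := fun x => (f x : ℕ))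
      rwa [Finset.sum_pair hwu] at h1
    have hu1 : (f u : ℕ) ≠ 0 := fun h => hu (Fin.ext (by simp [h]))
    have hw1 : (f w : ℕ) = 2 := by rw [hw]; rfl
    omega
  · push_neg at h2
    have h1 : ∀ w, f w = 1 := by
      intro w
      by_cases h0 : f w = 0
      · obtain ⟨u, _, hu2⟩ := hf.1 w h0
        exact absurd hu2 (h2 u)
      · have hd : ∀ x : Fin 3, x ≠ 0 → x ≠ 2 → x = 1 := by decide
        exact hd _ h0 (h2 w)
    calc (3 : ℕ) ≤ Fintype.card V := hn
      _ = ∑ _w : V, 1 := by rw [← Finset.card_univ, Finset.card_eq_sum_ones]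
      _ = ∑ w, (f w : ℕ) := Finset.sum_congr rfl (fun w _ => by rw [h1 w]; rfl)

lemma my_tds_lb [Fintype V] (G : SimpleGraph V) (hpos : 0 < Fintype.card V)
    (S : Finset V) (hS : G.IsTDS S) : 2 ≤ S.card := by
  have hne : Nonempty V := Fintype.card_pos_iff.mp hpos
  obtain ⟨v⟩ := hne
  obtain ⟨u, huS, hadj⟩ := hS v
  obtain ⟨w, hwS, hadj2⟩ := hS u
  have hwu : w ≠ u := fun h => G.irrefl (h ▸ hadj2)
  exact Finset.one_lt_card.mpr ⟨u, huS, w, hwS, hwu.symm⟩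


lemma my_lemmaB [Fintype V] (G : SimpleGraph V) (hconn : G.Connected)
    (D : Finset V) (v : V) (hv : v ∈ D)
    (hTDS : G.IsTDS D) (hmin : ∀ S : Finset V, G.IsTDS S → D.card ≤ S.card)
    (hV0 : ∀ u, u ∉ D → G.Adj v u) : ∀ z, z ≠ v → G.Adj v z := by
  classical
  by_contra hcon
  push_neg at hcon
  obtain ⟨z, hzv, hvz⟩ := hcon
  have hzD : z ∈ D := by
    by_contra h; exact hvz (hV0 z h)
  have hDpos : 0 < D.card := Finset.card_pos.mpr ⟨v, hv⟩
  -- Step 1: each x ∈ D has a "private" vertex whose only D-neighbor is x.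
  have step1 : ∀ x ∈ D, ∃ u, G.Adj u x ∧ ∀ d ∈ D, G.Adj u d → d = x := by
    intro x hx
    have hne : ¬ G.IsTDS (D.erase x) := by
      intro h
      have h1 := hmin _ h
      have h2 := Finset.card_erase_of_mem hx
      omega
    rw [SimpleGraph.IsTDS] at hne
    push_neg at hne
    obtain ⟨u, hu⟩ := hne
    obtain ⟨d, hd, hud⟩ := hTDS u
    have hdx : d = x := by
      by_contra hne'
      exact hu d (Finset.mem_erase.mpr ⟨hne', hd⟩) hud
    refine ⟨u, hdx ▸ hud, ?_⟩
    intro d' hd' hadj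
    by_contra hne'
    exact hu d' (Finset.mem_erase.mpr ⟨hne', hd'⟩) hadj
  let ψ : V → V := fun x => if h : x ∈ D then (step1 x h).choose else v
  have hψ1 : ∀ x ∈ D, G.Adj (ψ x) x := by
    intro x hx
    simp only [ψ, dif_pos hx]
    exact (step1 x hx).choose_spec.1
  have hψ2 : ∀ x ∈ D, ∀ d ∈ D, G.Adj (ψ x) d → d = x := by
    intro x hx
    simp only [ψ, dif_pos hx]
    exact (step1 x hx).choose_spec.2
  have hψne : ∀ x ∈ D, ψ x ≠ x := fun x hx h => G.irrefl (h ▸ hψ1 x hx)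
  have hψmem : ∀ x ∈ D, x ≠ v → ψ x ∈ D := by
    intro x hx hxv
    by_contra h
    exact hxv (hψ2 x hx v hv (hV0 _ h).symm).symm
  have hψinj : ∀ x₁ ∈ D, ∀ x₂ ∈ D, ψ x₁ = ψ x₂ → x₁ = x₂ := by
    intro x₁ h₁ x₂ h₂ he
    have h3 : G.Adj (ψ x₁) x₂ := he ▸ hψ1 x₂ h₂
    exact (hψ2 x₁ h₁ x₂ h₂ h3).symm
  -- v has a unique neighbor y in D
  obtain ⟨y, hyD, hvy⟩ := hTDS v
  have hyv : y ≠ v := fun h => G.irrefl (h ▸ hvy)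
  have hinjOn : ∀ (s : Finset V), s ⊆ D → Set.InjOn ψ s := by
    intro s hs a ha b hb he
    exact hψinj a (hs (Finset.mem_coe.mp ha)) b (hs (Finset.mem_coe.mp hb)) he
  have himg : (D.erase v).image ψ ⊆ D.filter (fun d => ¬ G.Adj v d) := by
    intro w hw
    obtain ⟨x, hx, rfl⟩ := Finset.mem_image.mp hw
    obtain ⟨hxv, hxD⟩ := Finset.mem_erase.mp hx
    refine Finset.mem_filter.mpr ⟨hψmem x hxD hxv, ?_⟩
    intro hadj
    exact hxv (hψ2 x hxD v hv hadj.symm).symm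
  have hcard1 : (D.filter (fun d => G.Adj v d)).card ≤ 1 := by
    have h1 : (D.erase v).card ≤ (D.filter (fun d => ¬ G.Adj v d)).card := by
      rw [← Finset.card_image_of_injOn (hinjOn _ (Finset.erase_subset v D))]
      exact Finset.card_le_card himg
    have h2 := Finset.card_filter_add_card_filter_not
      (s := D) (p := fun d => G.Adj v d)
    have h3 := Finset.card_erase_of_mem hv
    omega
  have huniq : ∀ y' ∈ D, G.Adj v y' → y' = y := by
    intro y' h1 h2
    exact Finset.card_le_one.mp hcard1 _ (Finset.mem_filter.mpr ⟨h1, h2⟩) _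
      (Finset.mem_filter.mpr ⟨hyD, hvy⟩)
  set T : Finset V := (D.erase v).erase y with hT
  have hmemT : ∀ {x : V}, x ∈ T ↔ x ∈ D ∧ x ≠ v ∧ x ≠ y := by
    intro x
    simp only [hT, Finset.mem_erase]
    tauto
  have hψv : ∀ x ∈ D, ψ x = v → x = y := by
    intro x hx h
    exact huniq x hx (h ▸ hψ1 x hx)
  have hψT : ∀ x ∈ T, ψ x ∈ T := by
    intro x hx
    obtain ⟨hxD, hxv, hxy⟩ := hmemT.mp hx
    refine hmemT.mpr ⟨hψmem x hxD hxv, ?_, ?_⟩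
    · intro h; exact hxy (hψv x hxD h)
    · intro h
      have hadj : G.Adj (ψ x) v := by rw [h]; exact hvy.symm
      exact hxv (hψ2 x hxD v hv hadj).symm
  have hTsub : T ⊆ D := fun a ha => (hmemT.mp ha).1
  have himgT : T.image ψ = T := by
    apply Finset.eq_of_subset_of_card_le
    · intro w hw
      obtain ⟨x, hx, rfl⟩ := Finset.mem_image.mp hw
      exact hψT x hx
    · rw [Finset.card_image_of_injOn (hinjOn T hTsub)]
  have hU : ∀ x ∈ T, ∀ d ∈ D, G.Adj x d → d = ψ x := by
    intro x hx d hd hadj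
    have hx' : x ∈ T.image ψ := himgT.symm ▸ hx
    obtain ⟨w, hwT, hwx⟩ := Finset.mem_image.mp hx'
    obtain ⟨hxD, hxv, _⟩ := hmemT.mp hx
    have hw2 : ∀ d ∈ D, G.Adj x d → d = w := by
      intro d' hd' ha'
      exact hψ2 w (hTsub hwT) d' hd' (hwx ▸ ha')
    have h1 : ψ x = w := hw2 (ψ x) (hψmem x hxD hxv) (hψ1 x hxD).symm
    exact (hw2 d hd hadj).trans h1.symm
  have hinv : ∀ x ∈ T, ψ (ψ x) = x := by
    intro x hx
    exact (hU (ψ x) (hψT x hx) x (hmemT.mp hx).1 (hψ1 x (hmemT.mp hx).1)).symm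
  have hzT : z ∈ T := hmemT.mpr ⟨hzD, hzv, fun h => hvz (h ▸ hvy)⟩
  -- representatives of pairs
  let e := Fintype.equivFin V
  set R : Finset V := T.filter (fun x => e x < e (ψ x)) with hR
  have hRsub : R ⊆ T := Finset.filter_subset _ _
  have hRmem : ∀ x ∈ T, x ∈ R ∨ ψ x ∈ R := by
    intro x hx
    have hne : e x ≠ e (ψ x) := fun h => hψne x (hTsub hx) (e.injective h).symm
    rcases lt_or_gt_of_ne hne with h | h
    · exact Or.inl (Finset.mem_filter.mpr ⟨hx, h⟩)
    · refine Or.inr (Finset.mem_filter.mpr ⟨hψT x hx, ?_⟩)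
      rw [hinv x hx]
      exact h
  -- boundary edges for pairs
  have hbd : ∀ x ∈ R, ∃ a, (a = x ∨ a = ψ x) ∧ ∃ b, b ∉ D ∧ G.Adj a b := by
    intro x hxR
    have hxT : x ∈ T := hRsub hxR
    have hvS : v ∉ ({x, ψ x} : Set V) := by
      intro h
      rcases h with h | h
      · exact (hmemT.mp hxT).2.1 h.symm
      · exact (hmemT.mp (hψT x hxT)).2.1 h.symm
    obtain ⟨p⟩ := hconn.preconnected x v
    obtain ⟨a, haS, b, hbS, hab⟩ := my_boundary G {x, ψ x} p (Or.inl rfl) hvS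
    have haS' : a = x ∨ a = ψ x := haS
    have hbD : b ∉ D := by
      intro hbDmem
      have haT : a ∈ T := by
        rcases haS' with h | h
        · exact h ▸ hxT
        · exact h ▸ hψT x hxT
      have hb' : b = ψ a := hU a haT b hbDmem hab
      apply hbS
      rcases haS' with h | h
      · subst h; rw [hb']; exact Or.inr rfl
      · subst h; rw [hb', hinv x hxT]; exact Or.inl rfl
    exact ⟨a, haS', b, hbD, hab⟩
  have hbd2 : ∀ x : V, ∃ a b : V, x ∈ R → ((a = x ∨ a = ψ x) ∧ b ∉ D ∧ G.Adj a b) := by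
    intro x
    by_cases hx : x ∈ R
    · obtain ⟨a, ha, b, hb, hab⟩ := hbd x hx
      exact ⟨a, b, fun _ => ⟨ha, hb, hab⟩⟩
    · exact ⟨v, v, fun h => absurd h hx⟩
  choose A B hAB using hbd2
  set Dstar : Finset V := insert v (R.biUnion (fun x => {A x, B x})) with hDstar
  have hAmem : ∀ x ∈ R, A x ∈ Dstar := by
    intro x hx
    exact Finset.mem_insert_of_mem (Finset.mem_biUnion.mpr ⟨x, hx, Finset.mem_insert_self _ _⟩)
  have hBmem : ∀ x ∈ R, B x ∈ Dstar := by
    intro x hx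
    exact Finset.mem_insert_of_mem (Finset.mem_biUnion.mpr
      ⟨x, hx, Finset.mem_insert_of_mem (Finset.mem_singleton_self _)⟩)
  have hDstarTDS : G.IsTDS Dstar := by
    intro u
    by_cases huD : u ∈ D
    · by_cases huT : u ∈ T
      · rcases hRmem u huT with hr | hr
        · rcases (hAB u hr).1 with h | h
          · exact ⟨B u, hBmem u hr, by
              have := (hAB u hr).2.2
              rwa [h] at this⟩
          · refine ⟨A u, hAmem u hr, ?_⟩
            rw [h]
            exact (hψ1 u huD).symm
        · rcases (hAB (ψ u) hr).1 with h | h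
          · refine ⟨A (ψ u), hAmem _ hr, ?_⟩
            rw [h]
            exact (hψ1 u huD).symm
          · refine ⟨B (ψ u), hBmem _ hr, ?_⟩
            have h2 := (hAB (ψ u) hr).2.2
            rwa [h, hinv u huT] at h2
      · have hvy' : u = v ∨ u = y := by
          by_contra hc
          push_neg at hc
          exact huT (hmemT.mpr ⟨huD, hc.1, hc.2⟩)
        rcases hvy' with rfl | rfl
        · rcases hRmem z hzT with hr | hr
          · exact ⟨B z, hBmem z hr, hV0 _ (hAB z hr).2.1⟩
          · exact ⟨B (ψ z), hBmem _ hr, hV0 _ (hAB (ψ z) hr).2.1⟩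
        · exact ⟨v, Finset.mem_insert_self _ _, hvy.symm⟩
    · exact ⟨v, Finset.mem_insert_self _ _, (hV0 u huD).symm⟩
  -- cardinality
  have hcard : Dstar.card < D.card := by
    have h1 : Dstar.card ≤ 1 + 2 * R.card := by
      calc Dstar.card ≤ (R.biUnion (fun x => {A x, B x})).card + 1 := Finset.card_insert_le _ _
      _ ≤ (∑ x ∈ R, ({A x, B x} : Finset V).card) + 1 := by
          exact Nat.add_le_add_right (Finset.card_biUnion_le) 1
      _ ≤ (∑ _x ∈ R, 2) + 1 := by
          refine Nat.add_le_add_right (Finset.sum_le_sum fun i _ => ?_) 1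
          exact le_trans (Finset.card_insert_le _ _) (by simp)
      _ = 1 + 2 * R.card := by rw [Finset.sum_const, smul_eq_mul]; ring
    have hdisj : Disjoint R (R.image ψ) := by
      rw [Finset.disjoint_left]
      intro a haR haI
      obtain ⟨x, hxR, rfl⟩ := Finset.mem_image.mp haI
      have h1 := (Finset.mem_filter.mp haR).2
      have h2 := (Finset.mem_filter.mp hxR).2
      rw [hinv x (hRsub hxR)] at h1
      exact absurd h1 (not_lt.mpr (le_of_lt h2))
    have hsub2 : R ∪ R.image ψ ⊆ T := by
      intro a ha
      rcases Finset.mem_union.mp ha with h | h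
      · exact hRsub h
      · obtain ⟨x, hxR, rfl⟩ := Finset.mem_image.mp h
        exact hψT x (hRsub hxR)
    have h2 : 2 * R.card ≤ T.card := by
      have := Finset.card_le_card hsub2
      rw [Finset.card_union_of_disjoint hdisj,
        Finset.card_image_of_injOn (hinjOn R (hRsub.trans hTsub))] at this
      omega
    have h3 : T.card = D.card - 2 := by
      have e1 := Finset.card_erase_of_mem hv
      have e2 : y ∈ D.erase v := Finset.mem_erase.mpr ⟨hyv, hyD⟩
      have e3 := Finset.card_erase_of_mem e2
      simp only [hT]
      omega
    have h4 : 2 ≤ D.card := by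
      have := Finset.one_lt_card.mpr ⟨v, hv, y, hyD, fun h => hyv h.symm⟩
      omega
    have h5 : 1 ≤ T.card := Finset.card_pos.mpr ⟨z, hzT⟩
    omega
  exact absurd (hmin Dstar hDstarTDS) (not_le.mpr hcard)


lemma my_case_one [Fintype V] (G : SimpleGraph V) [DecidableRel G.Adj] (hconn : G.Connected)
    (hn : 3 ≤ Fintype.card V) (h : G.trdn = G.tdn + 1)
    (f : V → Fin 3) (hf : G.IsTRDF f) (hw : ∑ w, (f w : ℕ) = G.trdn)
    (v : V) (hV2 : univ.filter (fun w => f w = 2) = {v}) :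
    G.maxDegree = Fintype.card V - 1 := by
  classical
  set D := univ.filter (fun w => f w ≠ 0) with hD
  have hfv : f v = 2 := by
    have hv' : v ∈ univ.filter (fun w => f w = 2) := by
      rw [hV2]; exact Finset.mem_singleton_self v
    exact (Finset.mem_filter.mp hv').2
  have hvD : v ∈ D := Finset.mem_filter.mpr ⟨Finset.mem_univ v, by rw [hfv]; decide⟩
  have hTDS : G.IsTDS D := by
    intro u
    by_cases h0 : f u = 0
    · obtain ⟨w, hadj, hw2⟩ := hf.1 u h0
      exact ⟨w, Finset.mem_filter.mpr ⟨Finset.mem_univ w, by rw [hw2]; decide⟩, hadj⟩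
    · obtain ⟨w, hadj, hw2⟩ := hf.2 u h0
      exact ⟨w, Finset.mem_filter.mpr ⟨Finset.mem_univ w, hw2⟩, hadj⟩
  have hcards : D.card = (univ.filter (fun w => f w = 1)).card + 1 := by
    rw [hD, my_filter_ne_zero, hV2, Finset.card_singleton]
  have htrdn : G.trdn = (univ.filter (fun w => f w = 1)).card + 2 := by
    rw [← hw, my_weight_eq, hV2, Finset.card_singleton]
  have hDcard : D.card = G.tdn := by omega
  have hmin : ∀ S : Finset V, G.IsTDS S → D.card ≤ S.card := by
    intro S hS
    rw [hDcard]
    exact Nat.sInf_le ⟨S, hS, rfl⟩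
  have hV0 : ∀ u, u ∉ D → G.Adj v u := by
    intro u hu
    have h0 : f u = 0 := by
      by_contra hne
      exact hu (Finset.mem_filter.mpr ⟨Finset.mem_univ u, hne⟩)
    obtain ⟨w, hadj, hw2⟩ := hf.1 u h0
    have hwv : w = v := by
      have hw' : w ∈ univ.filter (fun w => f w = 2) :=
        Finset.mem_filter.mpr ⟨Finset.mem_univ w, hw2⟩
      rw [hV2] at hw'
      exact Finset.mem_singleton.mp hw'
    exact (hwv ▸ hadj).symm
  exact my_maxdeg_eq G (by omega) v (my_lemmaB G hconn D v hvD hTDS hmin hV0)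

end Auxiliary

theorem stmt_3 {V : Type*} [Fintype V] (G : SimpleGraph V) [DecidableRel G.Adj]
    (hconn : G.Connected) (hn : 3 ≤ Fintype.card V) :
    G.trdn = G.tdn + 1 ↔ G.maxDegree = Fintype.card V - 1 := by
  classical
  constructor
  · intro h
    have hne : {w | ∃ f : V → Fin 3, G.IsTRDF f ∧ w = ∑ v, (f v : ℕ)}.Nonempty := by
      refine ⟨∑ v : V, (((fun (_ : V) => (1 : Fin 3)) v : Fin 3) : ℕ), (fun _ => 1), ⟨?_, ?_⟩, rfl⟩
      · intro v hv
        exact absurd (show (1 : Fin 3) = 0 from hv) (by decide)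
      · intro v _
        obtain ⟨u, hu⟩ := my_exists_adj G hconn (by omega) v
        exact ⟨u, hu, fun hc => absurd (show (1 : Fin 3) = 0 from hc) (by decide)⟩
    obtain ⟨f, hf, hw⟩ : ∃ f : V → Fin 3, G.IsTRDF f ∧ G.trdn = ∑ v, (f v : ℕ) :=
      Nat.sInf_mem hne
    have hTDSf : G.IsTDS (univ.filter (fun w => f w ≠ 0)) := by
      intro u
      by_cases h0 : f u = 0
      · obtain ⟨w, hadj, hw2⟩ := hf.1 u h0
        exact ⟨w, Finset.mem_filter.mpr ⟨Finset.mem_univ w, by rw [hw2]; decide⟩, hadj⟩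
      · obtain ⟨w, hadj, hw2⟩ := hf.2 u h0
        exact ⟨w, Finset.mem_filter.mpr ⟨Finset.mem_univ w, hw2⟩, hadj⟩
    have htle : G.tdn ≤ (univ.filter (fun w => f w = 1)).card
        + (univ.filter (fun w => f w = 2)).card := by
      calc G.tdn ≤ (univ.filter (fun w => f w ≠ 0)).card := Nat.sInf_le ⟨_, hTDSf, rfl⟩
        _ = _ := my_filter_ne_zero f
    have hwt := my_weight_eq f
    have hc2 : (univ.filter (fun w => f w = 2)).card ≤ 1 := by omega
    rcases Nat.le_one_iff_eq_zero_or_eq_one.mp hc2 with h0 | h1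
    · -- no vertex with label 2 : f ≡ 1
      have hall : ∀ w, f w = 1 := by
        have hemp : univ.filter (fun w => f w = 2) = ∅ := Finset.card_eq_zero.mp h0
        have hno2 : ∀ w, f w ≠ 2 := by
          intro w hw2
          have hmem : w ∈ univ.filter (fun w => f w = 2) :=
            Finset.mem_filter.mpr ⟨Finset.mem_univ w, hw2⟩
          rw [hemp] at hmem
          exact absurd hmem (Finset.notMem_empty w)
        intro w
        by_cases hz : f w = 0
        · obtain ⟨u, _, hu2⟩ := hf.1 w hz
          exact absurd hu2 (hno2 u)
        · exact (by decide : ∀ x : Fin 3, x ≠ 0 → x ≠ 2 → x = 1) _ hz (hno2 w)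
      have htrdnn : G.trdn = Fintype.card V := by
        rw [hw]
        calc ∑ w, (f w : ℕ) = ∑ _w : V, 1 :=
              Finset.sum_congr rfl (fun w _ => by rw [hall w]; rfl)
          _ = Fintype.card V := by rw [← Finset.card_univ, Finset.card_eq_sum_ones]
      obtain ⟨vv, bb, hvb, ⟨a, hva, hab⟩, hsupp⟩ := my_lemmaA G hconn hn
      have hvvbb : vv ≠ bb := G.ne_of_adj hvb
      set g : V → Fin 3 := fun w => if w = vv then 2 else if w = bb then 0 else 1 with hg
      have hgvv : g vv = 2 := by simp [hg]
      have hgbb : g bb = 0 := by simp [hg, Ne.symm hvvbb]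
      have hgv : ∀ w, w ≠ vv → w ≠ bb → g w = 1 := by
        intro w h1 h2; simp [hg, h1, h2]
      have hgTRDF : G.IsTRDF g := by
        constructor
        · intro w hw0
          have hwbb : w = bb := by
            by_contra hne'
            by_cases hwvv : w = vv
            · rw [hwvv, hgvv] at hw0; exact absurd hw0 (by decide)
            · rw [hgv w hwvv hne'] at hw0; exact absurd hw0 (by decide)
          refine ⟨vv, ?_, hgvv⟩
          rw [hwbb]; exact hvb.symm
        · intro w hw0
          by_cases hwvv : w = vv
          · subst hwvv
            refine ⟨a, hva, ?_⟩
            have ha1 : a ≠ w := (G.ne_of_adj hva).symm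
            rw [hgv a ha1 hab]; decide
          · have hwbb : w ≠ bb := by
              intro hwbb
              rw [hwbb, hgbb] at hw0
              exact hw0 rfl
            by_cases hadjb : G.Adj w bb
            · obtain ⟨c, hc1, hc2⟩ := hsupp w hadjb
              refine ⟨c, hc1, ?_⟩
              by_cases hcv : c = vv
              · rw [hcv, hgvv]; decide
              · rw [hgv c hcv hc2]; decide
            · obtain ⟨c, hc⟩ := my_exists_adj G hconn (by omega) w
              have hc2 : c ≠ bb := fun hcb => hadjb (hcb ▸ hc)
              refine ⟨c, hc, ?_⟩
              by_cases hcv : c = vv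
              · rw [hcv, hgvv]; decide
              · rw [hgv c hcv hc2]; decide
      have hkey : ∀ w, (g w : ℕ) + (if w = bb then 1 else 0)
          = 1 + (if w = vv then 1 else 0) := by
        intro w
        by_cases h1 : w = vv
        · subst h1
          rw [hgvv, if_neg hvvbb, if_pos rfl]
          rfl
        · by_cases h2 : w = bb
          · subst h2
            rw [hgbb, if_pos rfl, if_neg h1]
            rfl
          · rw [hgv w h1 h2, if_neg h2, if_neg h1]
            rfl
      have hsumg : ∑ w, (g w : ℕ) = Fintype.card V := by
        have h1 : (∑ w, ((g w : ℕ) + if w = bb then 1 else 0))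
            = ∑ w : V, (1 + if w = vv then 1 else 0) :=
          Finset.sum_congr rfl (fun w _ => hkey w)
        rw [Finset.sum_add_distrib, Finset.sum_add_distrib,
          Finset.sum_ite_eq' univ bb (fun _ => (1 : ℕ)),
          Finset.sum_ite_eq' univ vv (fun _ => (1 : ℕ))] at h1
        simp only [Finset.mem_univ, if_true] at h1
        have h2 : ∑ _w : V, (1 : ℕ) = Fintype.card V := by
          rw [← Finset.card_univ, Finset.card_eq_sum_ones]
        omega
      have hgw : ∑ w, (g w : ℕ) = G.trdn := by rw [hsumg, htrdnn]
      have hV2g : univ.filter (fun w => g w = 2) = {vv} := by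
        ext w
        simp only [Finset.mem_filter, Finset.mem_univ, true_and, Finset.mem_singleton]
        constructor
        · intro hw2
          by_contra hne'
          by_cases hwb : w = bb
          · rw [hwb, hgbb] at hw2; exact absurd hw2 (by decide)
          · rw [hgv w hne' hwb] at hw2; exact absurd hw2 (by decide)
        · intro hw2; rw [hw2, hgvv]
      exact my_case_one G hconn hn h g hgTRDF hgw vv hV2g
    · obtain ⟨v, hv⟩ := Finset.card_eq_one.mp h1
      exact my_case_one G hconn hn h f hf hw.symm v hv
  · intro h
    obtain ⟨v, hv⟩ := my_exists_univ G (by omega) h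
    obtain ⟨u, huv⟩ : ∃ u, u ≠ v := Fintype.exists_ne_of_one_lt_card (by omega) v
    have hadj : G.Adj v u := hv u huv
    have hmem : (2 : ℕ) ∈ {n | ∃ S : Finset V, G.IsTDS S ∧ n = S.card} := by
      refine ⟨{v, u}, ?_, (Finset.card_pair (G.ne_of_adj hadj)).symm⟩
      intro w
      by_cases hwv : w = v
      · exact ⟨u, Finset.mem_insert_of_mem (Finset.mem_singleton_self u), hwv ▸ hadj⟩
      · exact ⟨v, Finset.mem_insert_self v {u}, (hv w hwv).symm⟩
    have htdn : G.tdn = 2 := by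
      apply le_antisymm
      · exact Nat.sInf_le hmem
      · obtain ⟨S, hS, hcard⟩ : ∃ S : Finset V, G.IsTDS S ∧ G.tdn = S.card :=
          Nat.sInf_mem ⟨2, hmem⟩
        rw [hcard]
        exact my_tds_lb G (by omega) S hS
    set f3 : V → Fin 3 := fun w => if w = v then 2 else if w = u then 1 else 0 with hf3def
    have hf3v : f3 v = 2 := by simp [hf3def]
    have hf3u : f3 u = 1 := by simp [hf3def, huv]
    have hf3o : ∀ w, w ≠ v → w ≠ u → f3 w = 0 := by
      intro w h1 h2; simp [hf3def, h1, h2]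
    have hf3 : G.IsTRDF f3 := by
      constructor
      · intro w hw0
        have hwv : w ≠ v := by
          intro hwv; rw [hwv, hf3v] at hw0; exact absurd hw0 (by decide)
        exact ⟨v, (hv w hwv).symm, hf3v⟩
      · intro w hw0
        by_cases hwv : w = v
        · refine ⟨u, hwv ▸ hadj, ?_⟩
          rw [hf3u]; decide
        · by_cases hwu : w = u
          · refine ⟨v, (hv w hwv).symm, ?_⟩
            rw [hf3v]; decide
          · rw [hf3o w hwv hwu] at hw0
            exact absurd rfl hw0
    have hwt3 : ∑ w, (f3 w : ℕ) = 3 := by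
      have hkey : ∀ w, (f3 w : ℕ)
          = (if w = v then 2 else 0) + (if w = u then 1 else 0) := by
        intro w
        by_cases h1 : w = v
        · subst h1
          rw [hf3v, if_pos rfl, if_neg (Ne.symm huv)]
          rfl
        · by_cases h2 : w = u
          · subst h2
            rw [hf3u, if_neg h1, if_pos rfl]
            rfl
          · rw [hf3o w h1 h2, if_neg h1, if_neg h2]
            rfl
      rw [Finset.sum_congr rfl (fun w _ => hkey w), Finset.sum_add_distrib,
        Finset.sum_ite_eq' univ v (fun _ => (2 : ℕ)),
        Finset.sum_ite_eq' univ u (fun _ => (1 : ℕ))]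
      simp
    have hmem3 : (3 : ℕ) ∈ {w | ∃ f : V → Fin 3, G.IsTRDF f ∧ w = ∑ v, (f v : ℕ)} :=
      ⟨f3, hf3, hwt3.symm⟩
    have htrdn : G.trdn = 3 := by
      apply le_antisymm
      · exact Nat.sInf_le hmem3
      · obtain ⟨f', hf', hcard⟩ : ∃ f' : V → Fin 3, G.IsTRDF f' ∧ G.trdn = ∑ w, (f' w : ℕ) :=
          Nat.sInf_mem ⟨3, hmem3⟩
        rw [hcard]
        exact my_trdn_lb G hn f' hf'
    rw [htdn, htrdn]
end

section
/- If G is a graph with no isolated vertices and uv is an edge not in G, then γ_tR(G) − 2 ≤ γ_tR(G + uv) ≤ γ_tR(G), where G + uv denotes G with the edge uv added. -/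
open Finset
open scoped Classical

lemma adj_iff' {V : Type*} (G : SimpleGraph V) (u v x y : V) (huv : u ≠ v) :
    (G ⊔ SimpleGraph.fromEdgeSet {s(u, v)}).Adj x y ↔
      G.Adj x y ∨ (x = u ∧ y = v) ∨ (x = v ∧ y = u) := by
  simp only [SimpleGraph.sup_adj, SimpleGraph.fromEdgeSet_adj, Set.mem_singleton_iff,
    Sym2.eq, Sym2.rel_iff', Prod.mk.injEq, Prod.swap_prod_mk]
  constructor
  · rintro (h | ⟨h | h, _⟩) <;> tauto
  · rintro (h | ⟨hx, hy⟩ | ⟨hx, hy⟩)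
    · exact Or.inl h
    · subst hx; subst hy; exact Or.inr ⟨Or.inl ⟨rfl, rfl⟩, huv⟩
    · subst hx; subst hy; exact Or.inr ⟨Or.inr ⟨rfl, rfl⟩, huv.symm⟩

lemma sum_bound {V : Type*} [Fintype V] (f g : V → Fin 3) (a b : V)
    (h : ∀ x, (g x : ℕ) ≤ (f x : ℕ) + if x = a ∨ x = b then 1 else 0) :
    ∑ x, (g x : ℕ) ≤ ∑ x, (f x : ℕ) + 2 := by
  calc ∑ x, (g x : ℕ) ≤ ∑ x, ((f x : ℕ) + if x = a ∨ x = b then 1 else 0) :=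
        Finset.sum_le_sum (fun x _ => h x)
    _ = ∑ x, (f x : ℕ) + ∑ x, (if x = a ∨ x = b then 1 else 0) := Finset.sum_add_distrib
    _ ≤ ∑ x, (f x : ℕ) + 2 := by
        gcongr
        calc ∑ x, (if x = a ∨ x = b then 1 else 0)
            ≤ ∑ x, ((if x = a then 1 else 0) + if x = b then (1:ℕ) else 0) := by
              apply Finset.sum_le_sum; intro x _; split_ifs <;> simp_all
          _ = 2 := by
              rw [Finset.sum_add_distrib, Finset.sum_ite_eq' univ a (fun _ => 1),
                Finset.sum_ite_eq' univ b (fun _ => 1)]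
              simp

lemma fin3_cast_le (a : Fin 3) (h : a ≠ 0) : 1 ≤ (a : ℕ) := by
  rcases Fin.eq_zero_or_eq_succ a with h0 | ⟨i, hi⟩
  · exact absurd h0 h
  · subst hi; simp [Fin.val_succ]

/-- Case A: f u = 0, f v ≠ 0. -/
lemma caseA {V : Type*} [Fintype V] (G : SimpleGraph V) (u v : V) (huv : u ≠ v)
    (hadj : ¬ G.Adj u v) (u' : V) (hu' : G.Adj u u') (f : V → Fin 3)
    (hf : (G ⊔ SimpleGraph.fromEdgeSet {s(u, v)}).IsTRDF f)
    (h0 : f u = 0) (h1 : f v ≠ 0) :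
    ∃ g : V → Fin 3, G.IsTRDF g ∧ ∑ x, (g x : ℕ) ≤ ∑ x, (f x : ℕ) + 2 := by
  obtain ⟨hdom, htot⟩ := hf
  have huu' : u ≠ u' := G.ne_of_adj hu'
  set g : V → Fin 3 := fun x => if x = u then 1 else if x = u' ∧ f x = 0 then 1 else f x with hg
  have hgne : ∀ x, f x ≠ 0 → g x ≠ 0 := by
    intro x h; simp only [hg]; split_ifs <;> simp_all
  have hg2 : ∀ x, f x = 2 → g x = 2 := by
    intro x h; simp only [hg]
    split_ifs with h1' h2'
    · subst h1'; rw [h0] at h; exact absurd h (by decide)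
    · exact absurd h2'.2 (by rw [h]; decide)
    · exact h
  refine ⟨g, ⟨?_, ?_⟩, ?_⟩
  · intro x hx
    have hxu : x ≠ u := by
      intro h; subst h; simp only [hg, if_pos rfl] at hx; exact absurd hx (by decide)
    have hfx : f x = 0 := by
      by_contra h; exact hgne x h hx
    obtain ⟨w, hw, hw2⟩ := hdom x hfx
    have hGw : G.Adj x w := by
      rcases (adj_iff' G u v x w huv).1 hw with h | ⟨hx', _⟩ | ⟨hx', hw'⟩
      · exact h
      · exact absurd hx' hxu
      · subst hx'; exact absurd hfx h1
    exact ⟨w, hGw, hg2 w hw2⟩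
  · intro x hx
    by_cases hxu : x = u
    · subst hxu
      refine ⟨u', hu', ?_⟩
      simp only [hg, if_neg (Ne.symm huu')]
      split_ifs with h
      · decide
      · tauto
    · by_cases hxu' : x = u' ∧ f x = 0
      · refine ⟨u, ?_, ?_⟩
        · rw [hxu'.1]; exact hu'.symm
        · simp [hg]
      · have hfx : f x ≠ 0 := by
          intro h; apply hx; simp only [hg, if_neg hxu, if_neg hxu']; exact h
        obtain ⟨w, hw, hwne⟩ := htot x hfx
        have hGw : G.Adj x w := by
          rcases (adj_iff' G u v x w huv).1 hw with h | ⟨hx', _⟩ | ⟨_, hw'⟩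
          · exact h
          · exact absurd hx' hxu
          · subst hw'; exact absurd h0 hwne
        exact ⟨w, hGw, hgne w hwne⟩
  · apply sum_bound f g u u'
    intro x
    simp only [hg]
    split_ifs with h1' h2' <;> simp_all

/-- Case B: f u ≠ 0, f v ≠ 0. -/
lemma caseB {V : Type*} [Fintype V] (G : SimpleGraph V) (u v : V) (huv : u ≠ v)
    (hadj : ¬ G.Adj u v) (u' v' : V) (hu' : G.Adj u u') (hv' : G.Adj v v') (f : V → Fin 3)
    (hf : (G ⊔ SimpleGraph.fromEdgeSet {s(u, v)}).IsTRDF f)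
    (h0 : f u ≠ 0) (h1 : f v ≠ 0) :
    ∃ g : V → Fin 3, G.IsTRDF g ∧ ∑ x, (g x : ℕ) ≤ ∑ x, (f x : ℕ) + 2 := by
  obtain ⟨hdom, htot⟩ := hf
  set g : V → Fin 3 := fun x => if (x = u' ∨ x = v') ∧ f x = 0 then 1 else f x with hg
  have hgne : ∀ x, f x ≠ 0 → g x ≠ 0 := by
    intro x h; simp only [hg]; split_ifs <;> simp_all
  have hg2 : ∀ x, f x = 2 → g x = 2 := by
    intro x h; simp only [hg]
    split_ifs with h1'
    · exact absurd h1'.2 (by rw [h]; decide)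
    · exact h
  have hgnz : ∀ x, (x = u' ∨ x = v') → g x ≠ 0 := by
    intro x hx; simp only [hg]
    split_ifs with h
    · decide
    · tauto
  refine ⟨g, ⟨?_, ?_⟩, ?_⟩
  · intro x hx
    have hfx : f x = 0 := by by_contra h; exact hgne x h hx
    have hxu : x ≠ u := fun h => h0 (h ▸ hfx)
    have hxv : x ≠ v := fun h => h1 (h ▸ hfx)
    obtain ⟨w, hw, hw2⟩ := hdom x hfx
    have hGw : G.Adj x w := by
      rcases (adj_iff' G u v x w huv).1 hw with h | ⟨hx', _⟩ | ⟨hx', _⟩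
      · exact h
      · exact absurd hx' hxu
      · exact absurd hx' hxv
    exact ⟨w, hGw, hg2 w hw2⟩
  · intro x hx
    by_cases hxu : x = u
    · exact ⟨u', hxu ▸ hu', hgnz u' (Or.inl rfl)⟩
    by_cases hxv : x = v
    · exact ⟨v', hxv ▸ hv', hgnz v' (Or.inr rfl)⟩
    by_cases hc : (x = u' ∨ x = v') ∧ f x = 0
    · rcases hc.1 with h' | h'
      · exact ⟨u, h' ▸ hu'.symm, hgne u h0⟩
      · exact ⟨v, h' ▸ hv'.symm, hgne v h1⟩
    · have hfx : f x ≠ 0 := by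
        intro h; apply hx; simp only [hg, if_neg hc]; exact h
      obtain ⟨w, hw, hwne⟩ := htot x hfx
      have hGw : G.Adj x w := by
        rcases (adj_iff' G u v x w huv).1 hw with h | ⟨hx', _⟩ | ⟨hx', _⟩
        · exact h
        · exact absurd hx' hxu
        · exact absurd hx' hxv
      exact ⟨w, hGw, hgne w hwne⟩
  · apply sum_bound f g u' v'
    intro x
    simp only [hg]
    split_ifs <;> simp_all

/-- Case C: f u = 0, f v = 0. -/
lemma caseC {V : Type*} [Fintype V] (G : SimpleGraph V) (u v : V) (huv : u ≠ v)
    (f : V → Fin 3)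
    (hf : (G ⊔ SimpleGraph.fromEdgeSet {s(u, v)}).IsTRDF f)
    (h0 : f u = 0) (h1 : f v = 0) :
    G.IsTRDF f := by
  obtain ⟨hdom, htot⟩ := hf
  constructor
  · intro x hx
    obtain ⟨w, hw, hw2⟩ := hdom x hx
    have hGw : G.Adj x w := by
      rcases (adj_iff' G u v x w huv).1 hw with h | ⟨_, hw'⟩ | ⟨_, hw'⟩
      · exact h
      · subst hw'; exact absurd h1 (by rw [hw2]; decide)
      · subst hw'; exact absurd h0 (by rw [hw2]; decide)
    exact ⟨w, hGw, hw2⟩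
  · intro x hx
    obtain ⟨w, hw, hwne⟩ := htot x hx
    have hGw : G.Adj x w := by
      rcases (adj_iff' G u v x w huv).1 hw with h | ⟨_, hw'⟩ | ⟨_, hw'⟩
      · exact h
      · subst hw'; exact absurd h1 hwne
      · subst hw'; exact absurd h0 hwne
    exact ⟨w, hGw, hwne⟩

lemma key {V : Type*} [Fintype V] (G : SimpleGraph V) (hG : G.IsolateFree) (u v : V)
    (huv : u ≠ v) (hadj : ¬ G.Adj u v) (f : V → Fin 3)
    (hf : (G ⊔ SimpleGraph.fromEdgeSet {s(u, v)}).IsTRDF f) :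
    ∃ g : V → Fin 3, G.IsTRDF g ∧ ∑ x, (g x : ℕ) ≤ ∑ x, (f x : ℕ) + 2 := by
  obtain ⟨u', hu'⟩ := hG u
  obtain ⟨v', hv'⟩ := hG v
  by_cases h0 : f u = 0 <;> by_cases h1 : f v = 0
  · exact ⟨f, caseC G u v huv f hf h0 h1, by omega⟩
  · exact caseA G u v huv hadj u' hu' f hf h0 h1
  · obtain ⟨g, hg, hs⟩ := caseA G v u huv.symm (fun h => hadj h.symm) v' hv' f
      (by rwa [Sym2.eq_swap] at hf) h1 h0
    exact ⟨g, hg, hs⟩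
  · exact caseB G u v huv hadj u' v' hu' hv' f hf h0 h1


lemma trdn_set_nonempty {V : Type*} [Fintype V] (G : SimpleGraph V) (hG : G.IsolateFree) :
    {w | ∃ f : V → Fin 3, G.IsTRDF f ∧ w = ∑ v, (f v : ℕ)}.Nonempty := by
  refine ⟨∑ v : V, ((2 : Fin 3) : ℕ), fun _ => 2, ⟨?_, ?_⟩, rfl⟩
  · intro x hx; exact absurd hx (by decide : (2 : Fin 3) ≠ 0)
  · intro x _; obtain ⟨w, hw⟩ := hG x; exact ⟨w, hw, (by decide : (2 : Fin 3) ≠ 0)⟩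

theorem stmt_5 {V : Type*} [Fintype V] (G : SimpleGraph V) (hG : G.IsolateFree)
    (u v : V) (huv : u ≠ v) (hadj : ¬ G.Adj u v) :
    G.trdn - 2 ≤ (G ⊔ SimpleGraph.fromEdgeSet {s(u, v)}).trdn ∧
      (G ⊔ SimpleGraph.fromEdgeSet {s(u, v)}).trdn ≤ G.trdn := by
  set G' := G ⊔ SimpleGraph.fromEdgeSet {s(u, v)} with hG'
  have hG'free : G'.IsolateFree := by
    intro x; obtain ⟨w, hw⟩ := hG x; exact ⟨w, Or.inl hw⟩
  have hub : G'.trdn ≤ G.trdn := by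
    obtain ⟨f, hf, hsum⟩ := Nat.sInf_mem (trdn_set_nonempty G hG)
    apply Nat.sInf_le
    refine ⟨f, ⟨?_, ?_⟩, hsum⟩
    · intro x hx; obtain ⟨w, hw, h2⟩ := hf.1 x hx; exact ⟨w, Or.inl hw, h2⟩
    · intro x hx; obtain ⟨w, hw, h2⟩ := hf.2 x hx; exact ⟨w, Or.inl hw, h2⟩
  have hlb : G.trdn ≤ G'.trdn + 2 := by
    obtain ⟨f, hf, hsum⟩ := Nat.sInf_mem (trdn_set_nonempty G' hG'free)
    obtain ⟨g, hg, hs⟩ := key G hG u v huv hadj f hf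
    calc G.trdn ≤ ∑ x, (g x : ℕ) := Nat.sInf_le ⟨g, hg, rfl⟩
      _ ≤ (∑ x, (f x : ℕ)) + 2 := hs
      _ = G'.trdn + 2 := by rw [SimpleGraph.trdn, ← hsum]
  exact ⟨by omega, hub⟩
end

section
/- Let G be a graph with no isolated vertices of order n ≥ 3. Then γ_tR(G) = 3 if and only if Δ(G) = n − 1. -/
open Finset

lemma aux_trdf_ge {V : Type*} [Fintype V] (G : SimpleGraph V)
    (hn : 3 ≤ Fintype.card V) (f : V → Fin 3) (hf : G.IsTRDF f) :
    3 ≤ ∑ v, (f v : ℕ) := by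
  classical
  by_cases h2 : ∃ w, f w = 2
  · obtain ⟨w, hw⟩ := h2
    obtain ⟨u, huw, hu⟩ := hf.2 w (by rw [hw]; decide)
    have hne : w ≠ u := fun h => G.irrefl (h ▸ huw)
    have hsub : ({w, u} : Finset V) ⊆ univ := subset_univ _
    have hle : ∑ v ∈ ({w, u} : Finset V), (f v : ℕ) ≤ ∑ v, (f v : ℕ) :=
      Finset.sum_le_sum_of_subset hsub
    rw [Finset.sum_pair hne] at hle
    have h1 : (f w : ℕ) = 2 := by rw [hw]; rfl
    have h2 : (f u : ℕ) ≠ 0 := fun h => hu (Fin.ext h)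
    omega
  · push_neg at h2
    have h0 : ∀ v, f v ≠ 0 := by
      intro v hv
      obtain ⟨z, _, hz⟩ := hf.1 v hv
      exact h2 z hz
    calc 3 ≤ Fintype.card V := hn
    _ = ∑ _v : V, 1 := by rw [Finset.sum_const, smul_eq_mul, mul_one, Finset.card_univ]
    _ ≤ ∑ v, (f v : ℕ) :=
        Finset.sum_le_sum fun v _ =>
          Nat.one_le_iff_ne_zero.mpr (fun h => (h0 v) (Fin.ext h))


theorem stmt_6 {V : Type*} [Fintype V] (G : SimpleGraph V) [DecidableRel G.Adj]
    (hG : G.IsolateFree) (hn : 3 ≤ Fintype.card V) :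
    G.trdn = 3 ↔ G.maxDegree = Fintype.card V - 1 := by
  classical
  have hNE : Nonempty V := Fintype.card_pos_iff.mp (by omega)
  have hmaxlt : G.maxDegree < Fintype.card V := G.maxDegree_lt_card_verts
  constructor
  · -- forward
    intro h
    have hne : {w | ∃ f : V → Fin 3, G.IsTRDF f ∧ w = ∑ v, (f v : ℕ)}.Nonempty := by
      by_contra hc
      rw [Set.not_nonempty_iff_eq_empty] at hc
      rw [SimpleGraph.trdn, hc, Nat.sInf_empty] at h
      omega
    have h3 := Nat.sInf_mem hne
    rw [show sInf {w | ∃ f : V → Fin 3, G.IsTRDF f ∧ w = ∑ v, (f v : ℕ)} = G.trdn from rfl,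
      h] at h3
    obtain ⟨f, hf, hsum⟩ := h3
    by_cases h2 : ∃ w, f w = 2
    · obtain ⟨w, hw⟩ := h2
      obtain ⟨u, huw, hu⟩ := hf.2 w (by rw [hw]; decide)
      have hwu : w ≠ u := fun hh => G.irrefl (hh ▸ huw)
      -- every x outside {w,u} has f x = 0
      have hzero : ∀ x, x ≠ w → x ≠ u → f x = 0 := by
        intro x hxw hxu
        have hsub : ({w, u, x} : Finset V) ⊆ univ := subset_univ _
        have hle : ∑ v ∈ ({w, u, x} : Finset V), (f v : ℕ) ≤ ∑ v, (f v : ℕ) :=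
          Finset.sum_le_sum_of_subset hsub
        rw [Finset.sum_insert (by simp [hwu, Ne.symm hxw]),
          Finset.sum_pair (Ne.symm hxu)] at hle
        have h1 : (f w : ℕ) = 2 := by rw [hw]; rfl
        have hu1 : (f u : ℕ) ≠ 0 := fun hh => hu (Fin.ext hh)
        have : (f x : ℕ) = 0 := by omega
        exact Fin.ext this
      -- uniqueness of the 2
      have huniq : ∀ z, f z = 2 → z = w := by
        intro z hz
        by_contra hzw
        have hsub : ({w, z} : Finset V) ⊆ univ := subset_univ _
        have hle : ∑ v ∈ ({w, z} : Finset V), (f v : ℕ) ≤ ∑ v, (f v : ℕ) :=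
          Finset.sum_le_sum_of_subset hsub
        rw [Finset.sum_pair (fun hh => hzw hh.symm)] at hle
        have h1 : (f w : ℕ) = 2 := by rw [hw]; rfl
        have h2 : (f z : ℕ) = 2 := by rw [hz]; rfl
        omega
      -- w is adjacent to everything else
      have hdeg : G.degree w = Fintype.card V - 1 := by
        have hset : G.neighborFinset w = univ.erase w := by
          apply Finset.Subset.antisymm
          · intro x hx
            rw [SimpleGraph.mem_neighborFinset] at hx
            exact Finset.mem_erase.mpr ⟨fun hh => G.irrefl (hh ▸ hx), mem_univ x⟩
          · intro x hx
            obtain ⟨hxw, -⟩ := Finset.mem_erase.mp hx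
            rw [SimpleGraph.mem_neighborFinset]
            by_cases hxu : x = u
            · exact hxu ▸ huw
            · obtain ⟨z, hxz, hz2⟩ := hf.1 x (hzero x hxw hxu)
              exact ((huniq z hz2) ▸ hxz).symm
        rw [SimpleGraph.degree, hset, Finset.card_erase_of_mem (mem_univ w),
          Finset.card_univ]
      have h1 := G.degree_le_maxDegree w
      omega
    · -- all values are 1, so card V = 3
      push_neg at h2
      have h1 : ∀ v, f v = 1 := by
        intro v
        have h0 : f v ≠ 0 := by
          intro hv
          obtain ⟨z, -, hz⟩ := hf.1 v hv
          exact h2 z hz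
        have hv2 := h2 v
        have := (f v).isLt
        apply Fin.ext
        have e0 : ((0 : Fin 3) : ℕ) = 0 := rfl
        have e1 : ((1 : Fin 3) : ℕ) = 1 := rfl
        have e2 : ((2 : Fin 3) : ℕ) = 2 := rfl
        rw [Fin.ne_iff_vne, e0] at h0
        rw [Fin.ne_iff_vne, e2] at hv2
        rw [e1]; omega
      have hcard : Fintype.card V = 3 := by
        have : ∑ v, (f v : ℕ) = Fintype.card V := by
          have : ∀ v : V, (f v : ℕ) = 1 := fun v => by rw [h1 v]; rfl
          calc ∑ v, (f v : ℕ) = ∑ _v : V, 1 := Finset.sum_congr rfl fun v _ => this v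
          _ = Fintype.card V := by rw [Finset.sum_const, smul_eq_mul, mul_one, Finset.card_univ]
        omega
      -- find a vertex of degree 2
      obtain ⟨a⟩ := hNE
      obtain ⟨b, hab⟩ := hG a
      have hba : a ≠ b := fun hh => G.irrefl (hh ▸ hab)
      obtain ⟨c, hc⟩ : ∃ c, c ∉ ({a, b} : Finset V) := by
        by_contra hc
        push_neg at hc
        have : (univ : Finset V) ⊆ {a, b} := fun x _ => hc x
        have := Finset.card_le_card this
        rw [Finset.card_univ, hcard] at this
        have := Finset.card_insert_le a ({b} : Finset V)
        simp at this
        omega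
      simp only [Finset.mem_insert, Finset.mem_singleton, not_or] at hc
      obtain ⟨hca, hcb⟩ := hc
      have huniv : ({a, b, c} : Finset V) = univ := by
        apply Finset.eq_univ_of_card
        rw [Finset.card_insert_of_notMem (by simp [hba, Ne.symm hca]),
          Finset.card_pair (Ne.symm hcb), hcard]
      obtain ⟨d, hcd⟩ := hG c
      have hdc : d ≠ c := fun hh => G.irrefl (hh ▸ hcd)
      have hd : d ∈ ({a, b, c} : Finset V) := huniv ▸ mem_univ d
      simp only [Finset.mem_insert, Finset.mem_singleton] at hd
      have key : ∃ x, 2 ≤ G.degree x := by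
        rcases hd with rfl | rfl | rfl
        · refine ⟨d, ?_⟩
          have : ({b, c} : Finset V) ⊆ G.neighborFinset d := by
            intro x hx
            simp only [Finset.mem_insert, Finset.mem_singleton] at hx
            rw [SimpleGraph.mem_neighborFinset]
            rcases hx with rfl | rfl
            · exact hab
            · exact hcd.symm
          have := Finset.card_le_card this
          rw [Finset.card_pair (Ne.symm hcb)] at this
          exact this
        · refine ⟨d, ?_⟩
          have : ({a, c} : Finset V) ⊆ G.neighborFinset d := by
            intro x hx
            simp only [Finset.mem_insert, Finset.mem_singleton] at hx
            rw [SimpleGraph.mem_neighborFinset]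
            rcases hx with rfl | rfl
            · exact hab.symm
            · exact hcd.symm
          have := Finset.card_le_card this
          rw [Finset.card_pair (Ne.symm hca)] at this
          exact this
        · exact absurd rfl hdc
      obtain ⟨x, hx⟩ := key
      have := G.degree_le_maxDegree x
      omega
  · -- reverse
    intro h
    obtain ⟨v, hv⟩ := G.exists_maximal_degree_vertex
    have hdeg : G.degree v = Fintype.card V - 1 := by omega
    have hfull : ∀ x, x ≠ v → G.Adj v x := by
      have hset : G.neighborFinset v = univ.erase v := by
        apply Finset.eq_of_subset_of_card_le
        · intro x hx
          rw [SimpleGraph.mem_neighborFinset] at hx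
          exact Finset.mem_erase.mpr ⟨fun hh => G.irrefl (hh ▸ hx), mem_univ x⟩
        · rw [Finset.card_erase_of_mem (mem_univ v), Finset.card_univ, ← hdeg]
          rfl
      intro x hxv
      rw [← SimpleGraph.mem_neighborFinset, hset]
      exact Finset.mem_erase.mpr ⟨hxv, mem_univ x⟩
    obtain ⟨u, hvu⟩ := hG v
    have huv : u ≠ v := fun hh => G.irrefl (hh ▸ hvu)
    set f : V → Fin 3 := fun x => if x = v then 2 else if x = u then 1 else 0 with hfdef
    have hfv : f v = 2 := by simp [hfdef]
    have hfu : f u = 1 := by simp [hfdef, huv]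
    have hfx : ∀ x, x ≠ v → x ≠ u → f x = 0 := fun x h1 h2 => by simp [hfdef, h1, h2]
    have htrdf : G.IsTRDF f := by
      constructor
      · intro x hx
        have hxv : x ≠ v := by intro hh; rw [hh, hfv] at hx; exact absurd hx (by decide)
        exact ⟨v, (hfull x hxv).symm, hfv⟩
      · intro x hx
        by_cases hxv : x = v
        · subst hxv
          exact ⟨u, hvu, by rw [hfu]; decide⟩
        · by_cases hxu : x = u
          · subst hxu
            exact ⟨v, hvu.symm, by rw [hfv]; decide⟩
          · exact absurd (hfx x hxv hxu) hx
    have hsum : ∑ x, (f x : ℕ) = 3 := by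
      rw [← Finset.add_sum_erase _ _ (mem_univ v),
        ← Finset.add_sum_erase _ _ (Finset.mem_erase.mpr ⟨huv, mem_univ u⟩)]
      have hrest : ∑ x ∈ ((univ.erase v).erase u), ((f x : ℕ)) = 0 := by
        apply Finset.sum_eq_zero
        intro x hx
        have h1 := Finset.mem_erase.mp hx
        have h2 := (Finset.mem_erase.mp h1.2).1
        rw [hfx x h2 h1.1]; rfl
      rw [hrest, hfv, hfu]
      rfl
    have hmem : (3 : ℕ) ∈ {w | ∃ f : V → Fin 3, G.IsTRDF f ∧ w = ∑ v, (f v : ℕ)} :=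
      ⟨f, htrdf, hsum.symm⟩
    refine le_antisymm (Nat.sInf_le hmem) ?_
    exact le_csInf ⟨3, hmem⟩ fun w hw => by
      obtain ⟨g, hg, rfl⟩ := hw
      exact aux_trdf_ge G hn g hg
end

section
/- Let G be a graph with no isolated vertices such that γ_t(G) = γ_tR(G). Then b_tR(G) ≤ b_t(G), where b_t and b_tR are the total bondage and total Roman bondage numbers respectively. -/
open Finset

lemma tdn_le_trdn {V : Type*} [Fintype V] (H : SimpleGraph V) (hH : H.IsolateFree) :
    H.tdn ≤ H.trdn := by
  have hne : {w | ∃ f : V → Fin 3, H.IsTRDF f ∧ w = ∑ v, (f v : ℕ)}.Nonempty := by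
    refine ⟨∑ v : V, ((2 : Fin 3) : ℕ), fun _ => 2, ⟨?_, ?_⟩, rfl⟩
    · intro v hv; exact absurd hv (by decide : (2 : Fin 3) ≠ 0)
    · intro v _
      obtain ⟨u, hu⟩ := hH v
      exact ⟨u, hu, (by decide : (2 : Fin 3) ≠ 0)⟩
  obtain ⟨f, hf, heq⟩ := Nat.sInf_mem hne
  set S : Finset V := Finset.univ.filter (fun v => f v ≠ 0) with hS
  have hTDS : H.IsTDS S := by
    intro v
    rcases eq_or_ne (f v) 0 with h0 | h0
    · obtain ⟨u, hu, hu2⟩ := hf.1 v h0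
      exact ⟨u, by simp [hS, hu2], hu⟩
    · obtain ⟨u, hu, hu2⟩ := hf.2 v h0
      exact ⟨u, by simp [hS, hu2], hu⟩
  have h1 : H.tdn ≤ S.card := Nat.sInf_le ⟨S, hTDS, rfl⟩
  have h2 : S.card ≤ ∑ v, (f v : ℕ) := by
    calc S.card = ∑ _v ∈ S, 1 := Finset.card_eq_sum_ones S
    _ ≤ ∑ v ∈ S, (f v : ℕ) := by
        refine Finset.sum_le_sum ?_
        intro v hv
        have hv' : f v ≠ 0 := (Finset.mem_filter.1 hv).2
        have hv2 : (f v : ℕ) ≠ 0 := fun hc => hv' (Fin.ext hc)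
        exact Nat.one_le_iff_ne_zero.mpr hv2
    _ ≤ ∑ v, (f v : ℕ) := Finset.sum_le_sum_of_subset (S.subset_univ)
  have h3 : H.trdn = ∑ v, (f v : ℕ) := heq
  exact h3 ▸ h1.trans h2

theorem stmt_10 {V : Type*} [Fintype V] (G : SimpleGraph V) (hG : G.IsolateFree)
    (h : G.tdn = G.trdn) : G.btR ≤ G.bt := by
  apply sInf_le_sInf
  rintro n ⟨E', hsub, hiso, hlt, rfl⟩
  refine ⟨E', hsub, hiso, ?_, rfl⟩
  calc G.trdn = G.tdn := h.symm
  _ < (G.deleteEdges ↑E').tdn := hlt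
  _ ≤ (G.deleteEdges ↑E').trdn := tdn_le_trdn _ hiso
end

section
/- Let G be a graph with no isolated vertices such that γ_tR(G) = 2·γ_t(G). Then b_t(G) ≤ b_tR(G). -/
open Finset

lemma trdn_le_two_tdn {V : Type*} [Fintype V] (H : SimpleGraph V) (hH : H.IsolateFree) :
    H.trdn ≤ 2 * H.tdn := by
  have htds : H.IsTDS Finset.univ := fun v => by
    obtain ⟨u, hu⟩ := hH v; exact ⟨u, Finset.mem_univ u, hu⟩
  have hmem : H.tdn ∈ {n | ∃ S : Finset V, H.IsTDS S ∧ n = S.card} :=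
    Nat.sInf_mem ⟨Finset.univ.card, Finset.univ, htds, rfl⟩
  obtain ⟨S, hS, hcard⟩ := hmem
  classical
  apply Nat.sInf_le
  refine ⟨fun v => if v ∈ S then 2 else 0, ⟨?_, ?_⟩, ?_⟩
  · intro v _
    obtain ⟨u, huS, hadj⟩ := hS v
    exact ⟨u, hadj, by simp [huS]⟩
  · intro v _
    obtain ⟨u, huS, hadj⟩ := hS v
    exact ⟨u, hadj, by simp [huS]⟩
  · rw [hcard]
    have : ∀ v : V, (((if v ∈ S then 2 else 0 : Fin 3)) : ℕ) = if v ∈ S then 2 else 0 := by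
      intro v; split <;> rfl
    rw [Finset.sum_congr rfl fun v _ => this v, Finset.sum_ite_mem,
      Finset.univ_inter, Finset.sum_const, smul_eq_mul, mul_comm]

theorem stmt_11 {V : Type*} [Fintype V] (G : SimpleGraph V) (hG : G.IsolateFree)
    (h : G.trdn = 2 * G.tdn) : G.bt ≤ G.btR := by
  apply sInf_le_sInf
  rintro n ⟨E', hsub, hiso, hlt, rfl⟩
  refine ⟨E', hsub, hiso, ?_, rfl⟩
  have h2 := trdn_le_two_tdn _ hiso
  omega
end

section
/- Let G be a graph with no isolated vertices such that γ_tR(G) = 3·γ(G). Then b(G) ≤ b_tR(G). -/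
open Finset

lemma trdn_le_three_dn {V : Type*} [Fintype V] (H : SimpleGraph V) (hH : H.IsolateFree) :
    H.trdn ≤ 3 * H.dn := by
  classical
  have hne : {n | ∃ S : Finset V, H.IsDS S ∧ n = S.card}.Nonempty :=
    ⟨(Finset.univ : Finset V).card, Finset.univ, fun v => Or.inl (Finset.mem_univ v), rfl⟩
  obtain ⟨S, hS, hcard⟩ := Nat.sInf_mem hne
  choose n hn using hH
  set N := S.image n with hN
  set f : V → Fin 3 := fun v => if v ∈ S then 2 else if v ∈ N then 1 else 0 with hf
  have hTRDF : H.IsTRDF f := by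
    constructor
    · intro v hv
      have hvS : v ∉ S := by intro hmem; simp [hf, hmem] at hv
      rcases hS v with hmem | ⟨u, hu, hadj⟩
      · exact absurd hmem hvS
      · exact ⟨u, hadj, by simp [hf, hu]⟩
    · intro v hv
      by_cases hvS : v ∈ S
      · refine ⟨n v, hn v, ?_⟩
        by_cases h1 : n v ∈ S
        · simp [hf, h1]
        · have h2 : n v ∈ N := Finset.mem_image_of_mem n hvS
          simp [hf, h1, h2]
      · have hvN : v ∈ N := by
          by_contra hc
          simp [hf, hvS, hc] at hv
        obtain ⟨s, hsS, hsv⟩ := Finset.mem_image.mp hvN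
        exact ⟨s, by rw [← hsv]; exact (hn s).symm, by simp [hf, hsS]⟩
  have hsum : ∑ v, (f v : ℕ) ≤ 3 * S.card := by
    have hle : ∀ v, (f v : ℕ) ≤ (if v ∈ S then 2 else 0) + (if v ∈ N then 1 else 0) := by
      intro v
      by_cases h1 : v ∈ S <;> by_cases h2 : v ∈ N <;> simp [hf, h1, h2]
    calc ∑ v, (f v : ℕ) ≤ ∑ v, ((if v ∈ S then 2 else 0) + (if v ∈ N then 1 else 0)) :=
          Finset.sum_le_sum fun v _ => hle v
      _ = (∑ v, if v ∈ S then 2 else 0) + ∑ v, (if v ∈ N then 1 else 0) :=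
          Finset.sum_add_distrib
      _ = 2 * S.card + N.card := by
          rw [Finset.sum_ite_mem, Finset.sum_ite_mem]
          simp [mul_comm]
      _ ≤ 2 * S.card + S.card := Nat.add_le_add_left Finset.card_image_le _
      _ = 3 * S.card := by ring
  have h1 : H.trdn ≤ ∑ v, (f v : ℕ) := Nat.sInf_le ⟨f, hTRDF, rfl⟩
  have h2 : H.dn = S.card := hcard
  omega

theorem stmt_12 {V : Type*} [Fintype V] (G : SimpleGraph V) (hG : G.IsolateFree)
    (h : G.trdn = 3 * G.dn) : G.bond ≤ G.btR := by
  apply sInf_le_sInf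
  rintro x ⟨E', hE, hiso, hlt, rfl⟩
  refine ⟨E', hE, ?_, rfl⟩
  have h1 : (G.deleteEdges ↑E').trdn ≤ 3 * (G.deleteEdges ↑E').dn :=
    trdn_le_three_dn _ hiso
  omega
end

section
/- Let G be a graph with finite total Roman bondage number and let B be a minimum-cardinality edge set with G − B isolate-free and γ_tR(G − B) > γ_tR(G). Then γ_tR(G) + 1 ≤ γ_tR(G − B) ≤ γ_tR(G) + 2. -/
open Finset

private def raiseF : Fin 3 → Fin 3 := fun a => if a = 0 then 1 else a

private lemma raiseF_ne_zero : ∀ a, raiseF a ≠ 0 := by decide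

private lemma raiseF_eq_two : ∀ a, a = 2 → raiseF a = 2 := by decide

private lemma raiseF_coe_le : ∀ a : Fin 3, ((raiseF a : Fin 3) : ℕ) ≤ (a : ℕ) + 1 := by decide

private lemma isTRDF_bump {V : Type*} [DecidableEq V] (H : SimpleGraph V) (f : V → Fin 3)
    (S : Finset V)
    (h0 : ∀ x, f x = 0 → x ∉ S → ∃ y, H.Adj x y ∧ f y = 2)
    (h1 : ∀ x, (f x ≠ 0 ∨ x ∈ S) → ∃ y, H.Adj x y ∧ (f y ≠ 0 ∨ y ∈ S)) :
    H.IsTRDF (fun x => if x ∈ S then raiseF (f x) else f x) := by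
  constructor
  · intro x hx
    simp only at hx
    split_ifs at hx with hxS
    · exact absurd hx (raiseF_ne_zero _)
    · obtain ⟨y, hy, hy2⟩ := h0 x hx hxS
      refine ⟨y, hy, ?_⟩
      simp only
      split_ifs with hyS
      · exact raiseF_eq_two _ hy2
      · exact hy2
  · intro x hx
    simp only at hx
    have hx' : f x ≠ 0 ∨ x ∈ S := by
      by_cases hxS : x ∈ S
      · exact Or.inr hxS
      · simp only [if_neg hxS] at hx; exact Or.inl hx
    obtain ⟨y, hy, hy2⟩ := h1 x hx'
    refine ⟨y, hy, ?_⟩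
    simp only
    split_ifs with hyS
    · exact raiseF_ne_zero _
    · rcases hy2 with h | h
      · exact h
      · exact absurd h hyS

private lemma bump_weight {V : Type*} [Fintype V] [DecidableEq V] (f : V → Fin 3)
    (S : Finset V) :
    ∑ x, (((if x ∈ S then raiseF (f x) else f x) : Fin 3) : ℕ) ≤ ∑ x, ((f x : ℕ)) + S.card := by
  calc ∑ x, (((if x ∈ S then raiseF (f x) else f x) : Fin 3) : ℕ)
      ≤ ∑ x, ((f x : ℕ) + if x ∈ S then 1 else 0) := by
        apply Finset.sum_le_sum
        intro x _
        split_ifs with hxS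
        · exact raiseF_coe_le _
        · simp
    _ = ∑ x, (f x : ℕ) + ∑ x, (if x ∈ S then 1 else 0) := Finset.sum_add_distrib
    _ ≤ ∑ x, (f x : ℕ) + S.card := by
        gcongr
        rw [Finset.sum_ite_mem]
        simp [Finset.univ_inter]

private lemma trdn_deleteEdge_le {V : Type*} [Fintype V] [DecidableEq V]
    (H' : SimpleGraph V) (u v : V) (huv : H'.Adj u v)
    (hiso : (H'.deleteEdges {s(u,v)}).IsolateFree) :
    (H'.deleteEdges {s(u,v)}).trdn ≤ H'.trdn + 2 := by
  set H := H'.deleteEdges {s(u,v)} with hH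
  have hle : ∀ a b, H.Adj a b → H'.Adj a b := by
    intro a b h
    rw [hH, SimpleGraph.deleteEdges_adj] at h
    exact h.1
  have hadj : ∀ a b, H'.Adj a b → s(a,b) ≠ s(u,v) → H.Adj a b := by
    intro a b h hne
    rw [hH, SimpleGraph.deleteEdges_adj]
    exact ⟨h, by simpa using hne⟩
  have hiso' : H'.IsolateFree := fun x => (hiso x).imp (fun y h => hle _ _ h)
  -- nonemptiness of the TRDF set for H'
  have hne : {w | ∃ f : V → Fin 3, H'.IsTRDF f ∧ w = ∑ x, ((f x : ℕ))}.Nonempty := by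
    refine ⟨∑ x : V, (((fun (_ : V) => (1 : Fin 3)) x : ℕ)), fun _ => 1, ⟨?_, ?_⟩, rfl⟩
    · intro x hx
      simp only at hx
      exact absurd hx (by decide)
    · intro x _
      obtain ⟨y, hy⟩ := hiso' x
      refine ⟨y, hy, ?_⟩
      simp only
      decide
  have hmem := Nat.sInf_mem hne
  obtain ⟨f, hf, hw⟩ := hmem
  have hw' : H'.trdn = ∑ x, ((f x : ℕ)) := hw
  obtain ⟨w, hw1⟩ := hiso u
  obtain ⟨z, hz1⟩ := hiso v
  -- a generic way to conclude
  have conclude : ∀ S : Finset V, S.card ≤ 2 →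
      H.IsTRDF (fun x => if x ∈ S then raiseF (f x) else f x) → H.trdn ≤ H'.trdn + 2 := by
    intro S hS hg
    have h1 : H.trdn ≤ ∑ x, (((if x ∈ S then raiseF (f x) else f x) : Fin 3) : ℕ) :=
      Nat.sInf_le ⟨fun x => if x ∈ S then raiseF (f x) else f x, hg, rfl⟩
    have h2 := bump_weight f S
    have h3 : ∑ x, ((f x : ℕ)) + S.card ≤ H'.trdn + 2 := by
      rw [hw']
      exact Nat.add_le_add_left hS _
    exact h1.trans (h2.trans h3)
  have hkey : ∀ a b, H'.Adj a b → f a ≠ 0 → f b ≠ 0 → s(a,b) = s(u,v) →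
      (f u ≠ 0 ∧ f v ≠ 0) := by
    intro a b _ ha hb he
    rcases Sym2.eq_iff.mp he with ⟨rfl, rfl⟩ | ⟨rfl, rfl⟩
    · exact ⟨ha, hb⟩
    · exact ⟨hb, ha⟩
  by_cases hu0 : f u = 0 <;> by_cases hv0 : f v = 0
  · -- both zero: f itself works, S = ∅
    refine conclude ∅ (by simp) (isTRDF_bump H f ∅ ?_ ?_)
    · intro x hx _
      obtain ⟨y, hy, hy2⟩ := hf.1 x hx
      refine ⟨y, hadj _ _ hy ?_, hy2⟩
      intro he
      rcases Sym2.eq_iff.mp he with ⟨rfl, rfl⟩ | ⟨rfl, rfl⟩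
      · exact absurd hy2 (by rw [hv0]; decide)
      · exact absurd hy2 (by rw [hu0]; decide)
    · intro x hx
      rcases hx with hx | hx
      · obtain ⟨y, hy, hy2⟩ := hf.2 x hx
        refine ⟨y, hadj _ _ hy ?_, Or.inl hy2⟩
        intro he
        rcases Sym2.eq_iff.mp he with ⟨rfl, rfl⟩ | ⟨rfl, rfl⟩
        · exact hx hu0
        · exact hx hv0
      · simp at hx
  · -- f u = 0, f v ≠ 0 : S = {u, w}
    refine conclude {u, w} (Finset.card_insert_le _ _ |>.trans (by simp))
      (isTRDF_bump H f _ ?_ ?_)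
    · intro x hx hxS
      simp only [Finset.mem_insert, Finset.mem_singleton, not_or] at hxS
      obtain ⟨y, hy, hy2⟩ := hf.1 x hx
      refine ⟨y, hadj _ _ hy ?_, hy2⟩
      intro he
      rcases Sym2.eq_iff.mp he with ⟨rfl, rfl⟩ | ⟨rfl, rfl⟩
      · exact hxS.1 rfl
      · exact hv0 hx
    · intro x hx
      by_cases hxu : x = u
      · subst hxu
        exact ⟨w, hw1, Or.inr (by simp)⟩
      by_cases hxw : x = w
      · subst hxw
        exact ⟨u, hw1.symm, Or.inr (by simp)⟩
      have hx' : f x ≠ 0 := by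
        rcases hx with h | h
        · exact h
        · simp [hxu, hxw] at h
      obtain ⟨y, hy, hy2⟩ := hf.2 x hx'
      refine ⟨y, hadj _ _ hy ?_, Or.inl hy2⟩
      intro he
      rcases Sym2.eq_iff.mp he with ⟨rfl, rfl⟩ | ⟨rfl, rfl⟩
      · exact hxu rfl
      · exact hy2 hu0
  · -- f u ≠ 0, f v = 0 : S = {v, z}
    refine conclude {v, z} (Finset.card_insert_le _ _ |>.trans (by simp))
      (isTRDF_bump H f _ ?_ ?_)
    · intro x hx hxS
      simp only [Finset.mem_insert, Finset.mem_singleton, not_or] at hxS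
      obtain ⟨y, hy, hy2⟩ := hf.1 x hx
      refine ⟨y, hadj _ _ hy ?_, hy2⟩
      intro he
      rcases Sym2.eq_iff.mp he with ⟨rfl, rfl⟩ | ⟨rfl, rfl⟩
      · exact hu0 hx
      · exact hxS.1 rfl
    · intro x hx
      by_cases hxv : x = v
      · subst hxv
        exact ⟨z, hz1, Or.inr (by simp)⟩
      by_cases hxz : x = z
      · subst hxz
        exact ⟨v, hz1.symm, Or.inr (by simp)⟩
      have hx' : f x ≠ 0 := by
        rcases hx with h | h
        · exact h
        · simp [hxv, hxz] at h
      obtain ⟨y, hy, hy2⟩ := hf.2 x hx'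
      refine ⟨y, hadj _ _ hy ?_, Or.inl hy2⟩
      intro he
      rcases Sym2.eq_iff.mp he with ⟨rfl, rfl⟩ | ⟨rfl, rfl⟩
      · exact hy2 hv0
      · exact hxv rfl
  · -- both nonzero : S = {w, z}
    refine conclude {w, z} (Finset.card_insert_le _ _ |>.trans (by simp))
      (isTRDF_bump H f _ ?_ ?_)
    · intro x hx _
      obtain ⟨y, hy, hy2⟩ := hf.1 x hx
      refine ⟨y, hadj _ _ hy ?_, hy2⟩
      intro he
      rcases Sym2.eq_iff.mp he with ⟨rfl, rfl⟩ | ⟨rfl, rfl⟩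
      · exact hu0 hx
      · exact hv0 hx
    · intro x hx
      by_cases hxu : x = u
      · subst hxu
        exact ⟨w, hw1, Or.inr (by simp)⟩
      by_cases hxv : x = v
      · subst hxv
        exact ⟨z, hz1, Or.inr (by simp)⟩
      by_cases hxw : x = w
      · subst hxw
        exact ⟨u, hw1.symm, Or.inl hu0⟩
      by_cases hxz : x = z
      · subst hxz
        exact ⟨v, hz1.symm, Or.inl hv0⟩
      have hx' : f x ≠ 0 := by
        rcases hx with h | h
        · exact h
        · simp [hxw, hxz] at h
      obtain ⟨y, hy, hy2⟩ := hf.2 x hx'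
      refine ⟨y, hadj _ _ hy ?_, Or.inl hy2⟩
      intro he
      rcases Sym2.eq_iff.mp he with ⟨rfl, rfl⟩ | ⟨rfl, rfl⟩
      · exact hxu rfl
      · exact hxv rfl
theorem stmt_13 {V : Type*} [Fintype V] (G : SimpleGraph V)
    (hfin : G.btR ≠ ⊤) (B : Finset (Sym2 V)) (hBE : ↑B ⊆ G.edgeSet)
    (hB1 : (G.deleteEdges ↑B).IsolateFree)
    (hB2 : G.trdn < (G.deleteEdges ↑B).trdn)
    (hmin : ∀ B' : Finset (Sym2 V), ↑B' ⊆ G.edgeSet →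
      (G.deleteEdges ↑B').IsolateFree → G.trdn < (G.deleteEdges ↑B').trdn →
        B.card ≤ B'.card) :
    G.trdn + 1 ≤ (G.deleteEdges ↑B).trdn ∧ (G.deleteEdges ↑B).trdn ≤ G.trdn + 2 := by
  classical
  refine ⟨hB2, ?_⟩
  -- B is nonempty
  have hBne : B.Nonempty := by
    rcases B.eq_empty_or_nonempty with rfl | h
    · simp only [Finset.coe_empty, SimpleGraph.deleteEdges_empty] at hB2
      omega
    · exact h
  obtain ⟨e, heB⟩ := hBne
  obtain ⟨⟨u, v⟩, rfl⟩ := Quot.exists_rep e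
  have huvG : G.Adj u v := hBE heB
  set B' : Finset (Sym2 V) := B.erase s(u, v) with hB'
  have hsub : (B' : Set (Sym2 V)) ⊆ G.edgeSet := by
    refine Set.Subset.trans ?_ hBE
    intro x hx
    rw [hB'] at hx
    rw [Finset.mem_coe] at hx ⊢
    exact Finset.mem_of_mem_erase hx
  have hdecomp : G.deleteEdges ↑B = (G.deleteEdges ↑B').deleteEdges {s(u, v)} := by
    rw [SimpleGraph.deleteEdges_deleteEdges]
    congr 1
    rw [hB']
    ext x
    simp only [Set.mem_union, Finset.coe_erase, Set.mem_diff, Set.mem_singleton_iff,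
      Finset.mem_coe]
    constructor
    · intro hx
      by_cases hxe : x = s(u, v)
      · exact Or.inr hxe
      · exact Or.inl ⟨hx, hxe⟩
    · rintro (⟨hx, _⟩ | rfl)
      · exact hx
      · exact heB
  have hiso : ((G.deleteEdges ↑B').deleteEdges {s(u, v)}).IsolateFree := by
    rw [← hdecomp]; exact hB1
  have hiso' : (G.deleteEdges ↑B').IsolateFree := by
    intro x
    obtain ⟨y, hy⟩ := hiso x
    rw [SimpleGraph.deleteEdges_adj] at hy
    exact ⟨y, hy.1⟩
  have huv' : (G.deleteEdges ↑B').Adj u v := by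
    rw [SimpleGraph.deleteEdges_adj]
    refine ⟨huvG, ?_⟩
    rw [hB']
    simp
  have hB'le : (G.deleteEdges ↑B').trdn ≤ G.trdn := by
    by_contra h
    push_neg at h
    have := hmin B' hsub hiso' h
    have hlt : B'.card < B.card := Finset.card_erase_lt_of_mem heB
    omega
  have := trdn_deleteEdge_le (G.deleteEdges ↑B') u v huv' hiso
  rw [hdecomp]
  omega
end

section
/- Let G be a graph with no isolated vertices, finite total Roman bondage number, minimum degree δ(G) ≥ 2, and a unique minimum-weight total Roman dominating function. Then b_tR(G) = 1. -/
open Finset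

section Aux
variable {V : Type*} [Fintype V] (G : SimpleGraph V)

private lemma fin3_aux : ∀ y : Fin 3, y ≠ 0 → y ≠ 2 → y = 1 := by decide

private lemma trdn_le' {f : V → Fin 3} (hf : G.IsTRDF f) : G.trdn ≤ ∑ v, (f v : ℕ) :=
  Nat.sInf_le ⟨f, hf, rfl⟩

private lemma trdn_mem' (hG : G.IsolateFree) :
    ∃ f : V → Fin 3, G.IsTRDF f ∧ ∑ v, (f v : ℕ) = G.trdn := by
  have hne : {w | ∃ f : V → Fin 3, G.IsTRDF f ∧ w = ∑ v, (f v : ℕ)}.Nonempty := by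
    refine ⟨_, fun _ => 2, ⟨fun v h => absurd h (by decide : ¬(2:Fin 3) = 0), fun v _ => ?_⟩, rfl⟩
    obtain ⟨u, hu⟩ := hG v
    exact ⟨u, hu, (by decide : (2:Fin 3) ≠ 0)⟩
  obtain ⟨g, hg, hw⟩ := Nat.sInf_mem hne
  exact ⟨g, hg, hw.symm⟩

private lemma exists_adj_ne' [DecidableRel G.Adj] (hδ : 2 ≤ G.minDegree) (x w : V) :
    ∃ u, G.Adj x u ∧ u ≠ w := by
  have h1 : 1 < (G.neighborFinset x).card :=
    lt_of_lt_of_le one_lt_two (le_trans hδ (G.minDegree_le_degree x))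
  obtain ⟨u, hu, hne⟩ := Finset.exists_mem_ne h1 w
  exact ⟨u, (G.mem_neighborFinset x u).1 hu, hne⟩

end Aux

theorem stmt_19 {V : Type*} [Fintype V] (G : SimpleGraph V) [DecidableRel G.Adj]
    (hG : G.IsolateFree) (hfin : G.btR ≠ ⊤) (hδ : 2 ≤ G.minDegree)
    (huniq : ∃! f : V → Fin 3, G.IsTRDF f ∧ (∑ v, (f v : ℕ)) = G.trdn) :
    G.btR = 1 := by
  classical
  obtain ⟨f, ⟨hf, hsum⟩, hun⟩ := huniq
  -- V is nonempty
  have hVne : Nonempty V := by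
    by_contra h
    rw [not_nonempty_iff] at h
    have h0 : ∀ H : SimpleGraph V, H.trdn = 0 := by
      intro H
      have : H.trdn ≤ 0 :=
        Nat.sInf_le ⟨fun v => 0, ⟨fun v => isEmptyElim v, fun v => isEmptyElim v⟩, by simp⟩
      omega
    apply hfin
    rw [SimpleGraph.btR, sInf_eq_top]
    rintro n ⟨E', -, -, hlt, -⟩
    rw [h0, h0] at hlt
    exact absurd hlt (lt_irrefl 0)
  -- there is a vertex labeled 2
  have hv2 : ∃ v, f v = 2 := by
    by_contra hcon
    push_neg at hcon
    have h1 : ∀ x, f x = 1 := by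
      intro x
      refine fin3_aux _ (fun h0 => ?_) (hcon x)
      obtain ⟨u, -, hu2⟩ := hf.1 x h0
      exact hcon u hu2
    obtain ⟨v0⟩ := hVne
    obtain ⟨w, hw⟩ := hG v0
    have hwv0 : w ≠ v0 := (G.ne_of_adj hw).symm
    set g : V → Fin 3 := fun x => if x = w then 0 else if x = v0 then 2 else 1 with hgdef
    have hgw : g w = 0 := by simp [hgdef]
    have hgv0 : g v0 = 2 := by simp [hgdef, hwv0.symm]
    have hg1 : ∀ x, x ≠ w → x ≠ v0 → g x = 1 := by
      intro x h1 h2; simp [hgdef, h1, h2]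
    have hgTRDF : G.IsTRDF g := by
      constructor
      · intro x hx0
        have hxw : x = w := by
          by_contra hxw
          by_cases hxv : x = v0
          · rw [hxv, hgv0] at hx0; exact absurd hx0 (by decide)
          · rw [hg1 x hxw hxv] at hx0; exact absurd hx0 (by decide)
        subst hxw
        exact ⟨v0, hw.symm, hgv0⟩
      · intro x hx
        obtain ⟨u, hu, hune⟩ := exists_adj_ne' G hδ x w
        refine ⟨u, hu, ?_⟩
        by_cases huv : u = v0
        · rw [huv, hgv0]; decide
        · rw [hg1 u hune huv]; decide
    have hcard2 : 2 ≤ Fintype.card V :=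
      Fintype.one_lt_card_iff_nontrivial.2 ⟨⟨w, v0, hwv0⟩⟩
    have hsumf : ∑ x, (f x : ℕ) = Fintype.card V := by
      simp [h1]
    have hsumg : ∑ x, (g x : ℕ) = Fintype.card V := by
      rw [← Finset.add_sum_erase _ _ (Finset.mem_univ w),
        ← Finset.add_sum_erase _ _ (Finset.mem_erase.2 ⟨hwv0.symm, Finset.mem_univ v0⟩)]
      have hrest : ∀ x ∈ (Finset.univ.erase w).erase v0, ((g x : ℕ)) = 1 := by
        intro x hx
        obtain ⟨hxv, hx'⟩ := Finset.mem_erase.1 hx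
        obtain ⟨hxw, -⟩ := Finset.mem_erase.1 hx'
        simp [hg1 x hxw hxv]
      rw [Finset.sum_congr rfl hrest, Finset.sum_const, smul_eq_mul, mul_one,
        Finset.card_erase_of_mem (Finset.mem_erase.2 ⟨hwv0.symm, Finset.mem_univ v0⟩),
        Finset.card_erase_of_mem (Finset.mem_univ w), Finset.card_univ, hgw, hgv0]
      simp only [Fin.val_zero, Fin.val_two]
      omega
    have hgf : g = f := hun g ⟨hgTRDF, by rw [hsumg, ← hsum, hsumf]⟩
    have hcontr := h1 v0
    rw [← hgf, hgv0] at hcontr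
    exact absurd hcontr (by decide)
  obtain ⟨v, hv2⟩ := hv2
  -- v has an external private neighbor labeled 0
  have hepn : ∃ w, f w = 0 ∧ G.Adj v w ∧ ∀ x, G.Adj w x → f x = 2 → x = v := by
    by_contra hcon
    push_neg at hcon
    set g : V → Fin 3 := Function.update f v 1 with hgdef
    have hgv : g v = 1 := Function.update_self v 1 f
    have hgne : ∀ x, x ≠ v → g x = f x := fun x hx => Function.update_of_ne hx 1 f
    have hgTRDF : G.IsTRDF g := by
      constructor
      · intro x hx0
        have hxv : x ≠ v := by
          intro h; rw [h, hgv] at hx0; exact absurd hx0 (by decide)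
        rw [hgne x hxv] at hx0
        obtain ⟨u, hu, hu2⟩ := hf.1 x hx0
        by_cases huv : u = v
        · subst huv
          obtain ⟨y, hy, hy2, hyv⟩ := hcon x hx0 hu.symm
          exact ⟨y, hy, by rw [hgne y hyv]; exact hy2⟩
        · exact ⟨u, hu, by rw [hgne u huv]; exact hu2⟩
      · intro x hx
        by_cases hxv : x = v
        · obtain ⟨u, hu, hu0⟩ := hf.2 x (by rw [hxv, hv2]; decide)
          have huv : u ≠ v := by
            rw [← hxv]; exact (G.ne_of_adj hu).symm
          exact ⟨u, hu, by rw [hgne u huv]; exact hu0⟩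
        · rw [hgne x hxv] at hx
          obtain ⟨u, hu, hu0⟩ := hf.2 x hx
          by_cases huv : u = v
          · exact ⟨u, hu, by rw [huv, hgv]; decide⟩
          · exact ⟨u, hu, by rw [hgne u huv]; exact hu0⟩
    have hsum' : ∑ x, (g x : ℕ) + 1 = ∑ x, (f x : ℕ) := by
      rw [← Finset.add_sum_erase _ (fun x => ((g x : ℕ))) (Finset.mem_univ v),
        ← Finset.add_sum_erase _ (fun x => ((f x : ℕ))) (Finset.mem_univ v)]
      have hrest : ∀ x ∈ Finset.univ.erase v, ((g x : ℕ)) = ((f x : ℕ)) := by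
        intro x hx
        rw [hgne x (Finset.mem_erase.1 hx).1]
      rw [Finset.sum_congr rfl hrest, hgv, hv2]
      simp only [Fin.val_one, Fin.val_two]
      omega
    have := trdn_le' G hgTRDF
    omega
  obtain ⟨w, hw0, hadj, hpriv⟩ := hepn
  have hvw : v ≠ w := G.ne_of_adj hadj
  -- deleting the edge vw works
  set H := G.deleteEdges ↑({s(v, w)} : Finset (Sym2 V)) with hHdef
  have hHadj : ∀ a b, H.Adj a b ↔ G.Adj a b ∧ ¬(s(a, b) = s(v, w)) := by
    intro a b
    rw [hHdef, SimpleGraph.deleteEdges_adj]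
    simp
  have hH : H.IsolateFree := by
    intro x
    obtain ⟨u, hu, hune⟩ := exists_adj_ne' G hδ x (if x = v then w else v)
    refine ⟨u, (hHadj x u).2 ⟨hu, ?_⟩⟩
    intro heq
    rw [Sym2.eq_iff] at heq
    rcases heq with ⟨hx, hu'⟩ | ⟨hx, hu'⟩
    · rw [if_pos hx] at hune; exact hune hu'
    · have hxv : x ≠ v := by rw [hx]; exact hvw.symm
      rw [if_neg hxv] at hune; exact hune hu'
  have hle : G.trdn ≤ H.trdn := by
    obtain ⟨g, hg, hgsum⟩ := trdn_mem' H hH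
    have hgG : G.IsTRDF g := by
      constructor
      · intro x h0
        obtain ⟨u, hu, hu2⟩ := hg.1 x h0
        exact ⟨u, ((hHadj x u).1 hu).1, hu2⟩
      · intro x h0
        obtain ⟨u, hu, hu2⟩ := hg.2 x h0
        exact ⟨u, ((hHadj x u).1 hu).1, hu2⟩
    calc G.trdn ≤ ∑ x, (g x : ℕ) := trdn_le' G hgG
    _ = H.trdn := hgsum
  have hlt : G.trdn < H.trdn := by
    refine lt_of_le_of_ne hle (fun heq => ?_)
    obtain ⟨g, hg, hgsum⟩ := trdn_mem' H hH
    have hgG : G.IsTRDF g := by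
      constructor
      · intro x h0
        obtain ⟨u, hu, hu2⟩ := hg.1 x h0
        exact ⟨u, ((hHadj x u).1 hu).1, hu2⟩
      · intro x h0
        obtain ⟨u, hu, hu2⟩ := hg.2 x h0
        exact ⟨u, ((hHadj x u).1 hu).1, hu2⟩
    have hgf : g = f := hun g ⟨hgG, by rw [hgsum, ← heq]⟩
    obtain ⟨u, hu, hu2⟩ := hg.1 w (by rw [hgf]; exact hw0)
    obtain ⟨huG, hune⟩ := (hHadj w u).1 hu
    have huv : u = v := hpriv u huG (by rw [← hgf]; exact hu2)
    apply hune
    rw [huv, Sym2.eq_swap]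
  -- conclude
  refine le_antisymm ?_ ?_
  · apply sInf_le
    refine ⟨{s(v, w)}, ?_, hH, hlt, ?_⟩
    · intro e he
      simp only [Finset.coe_singleton, Set.mem_singleton_iff] at he
      rw [he, SimpleGraph.mem_edgeSet]
      exact hadj
    · rw [Finset.card_singleton, Nat.cast_one]
  · apply le_sInf
    rintro n ⟨E', -, -, hlt', rfl⟩
    have hE : E' ≠ ∅ := by
      rintro rfl
      rw [Finset.coe_empty, SimpleGraph.deleteEdges_empty] at hlt'
      exact absurd hlt' (lt_irrefl _)
    have : 1 ≤ E'.card := Finset.card_pos.2 (Finset.nonempty_iff_ne_empty.2 hE)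
    exact_mod_cast this
end
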